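/- arXiv:1309.5116 — 12 statements merged into one kernel-verified Lean document; each statement's English description precedes it below -/
import Mathlib

section
/- Fix an odd integer b ≥ 3 and an even integer n ≥ 2. For all integers i, j with -n/2 ≤ i, j ≤ n/2, the balanced carries transition probability satisfies K(i,j) = b^{-n} · Σ_{l=0}^{⌊ j + ((n+1)/b)·((b-1)/2) - i/b ⌋} (-1)^l · C(n+1, l) · C(n + jb + (n+1)(b-1)/2 - i - lb, n), where C(m, n) denotes the binomial coefficient, taken to be 0 whenever m < n. -/
/-- The number of `n`-tuples of balanced base-`b` digits `(X_1, …, X_n)`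
(integers with `|X_k| ≤ (b-1)/2`) such that
`j*b - (b-1)/2 ≤ i + X_1 + ⋯ + X_n ≤ j*b + (b-1)/2`. -/
noncomputable def balN (b : ℤ) (n : ℕ) (i j : ℤ) : ℕ :=
  (Finset.filter
    (fun X : Fin n → ℤ =>
      j * b - (b - 1) / 2 ≤ i + ∑ k, X k ∧ i + ∑ k, X k ≤ j * b + (b - 1) / 2)
    (Fintype.piFinset fun _ : Fin n => Finset.Icc (-((b - 1) / 2)) ((b - 1) / 2))).card

/-- The balanced carries transition probability `K(i,j) = b^{-n} N(i,j)`. -/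
noncomputable def balK (b : ℤ) (n : ℕ) (i j : ℤ) : ℚ := (balN b n i j : ℚ) / (b : ℚ) ^ n

/-- The binomial coefficient `C(m, k)` for integers `m, k`, with the convention that
`C(m, k) = 0` whenever `m < k` (in particular whenever `m` is negative) or `k < 0`. -/
def intChoose (m k : ℤ) : ℤ :=
  if 0 ≤ m ∧ 0 ≤ k then (m.toNat.choose k.toNat : ℤ) else 0


/-!
Shifting each balanced digit by `m = (b-1)/2` and adjoining the slack `j*b + m - i - ∑ X_k` as an
`(n+1)`-st digit identifies `N(i,j)` with the number of ways to write
`T = j*b + (n+1)*m - i` as a sum of `n+1` ordinary digits in `[0, b)`. That number is the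
coefficient of `x^T` in `(1 + x + ⋯ + x^(b-1))^(n+1) = (1 - x^b)^(n+1) (1 - x)^(-(n+1))`;
expanding the first factor binomially and the second as `∑ C(n+r, n) x^r` gives the alternating
sum, whose terms vanish once `l > ⌊T/b⌋`.
-/

open Finset PowerSeries

lemma intChoose_of_lt {m k : ℤ} (h : m < k) : intChoose m k = 0 := by
  unfold intChoose
  split_ifs
  · exact_mod_cast Nat.choose_eq_zero_of_lt (by omega)
  · rfl

lemma intChoose_natCast (m k : ℕ) : intChoose m k = m.choose k := by
  simp [intChoose]

lemma sum_Icc_eq_sum_Icc_of_eq_zero {ι R : Type*} [LinearOrder ι] [LocallyFiniteOrder ι]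
    [AddCommMonoid R] (f : ι → R) {c a b : ι} (ha : ∀ l, a < l → f l = 0)
    (hb : ∀ l, b < l → f l = 0) :
    ∑ l ∈ Icc c a, f l = ∑ l ∈ Icc c b, f l := by
  have extend (a a' : ι) (ha : ∀ l, a < l → f l = 0) :
      ∑ l ∈ Icc c a, f l = ∑ l ∈ Icc c (max a a'), f l :=
    sum_subset (Icc_subset_Icc_right (le_max_left _ _)) fun l hl hla =>
      ha l (by simp only [mem_Icc, not_and, not_le] at hl hla; exact hla hl.1)
  rw [extend a b ha, extend b a hb, max_comm]

lemma sum_range_eq_sum_Icc_natCast {R : Type*} [AddCommMonoid R] (f : ℤ → R) (N : ℕ) :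
    ∑ l ∈ range (N + 1), f l = ∑ l ∈ Icc (0 : ℤ) N, f l := by
  rw [Int.Icc_eq_finset_map, sum_map]
  simp

def boundedCompositions (β M : ℕ) (T : ℤ) : Finset (Fin M → ℕ) :=
  {x ∈ Fintype.piFinset fun _ => range β | ((∑ k, x k : ℕ) : ℤ) = T}

lemma card_filter_piFinset_succ_sum_eq {α : Type*} [AddCommGroup α] [DecidableEq α]
    (s : Finset α) (n : ℕ) (c : α) :
    #{Y ∈ Fintype.piFinset fun _ : Fin (n + 1) => s | ∑ k, Y k = c} =
      #{X ∈ Fintype.piFinset fun _ : Fin n => s | c - ∑ k, X k ∈ s} := by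
  refine card_nbij' Fin.init (fun X => Fin.snoc X (c - ∑ k, X k)) ?_ ?_ ?_ ?_
  · intro Y hY
    simp only [coe_filter, Fintype.mem_piFinset, Set.mem_ofPred_eq,
      Fin.sum_univ_castSucc] at hY ⊢
    obtain ⟨hYs, rfl⟩ := hY
    exact ⟨fun k => hYs _, by simpa [Fin.init] using hYs (Fin.last n)⟩
  · intro X hX
    simp only [coe_filter, Fintype.mem_piFinset, Set.mem_ofPred_eq, Fin.sum_univ_castSucc,
      Fin.snoc_castSucc, Fin.snoc_last] at hX ⊢
    exact ⟨Fin.lastCases (by simpa using hX.2) (by simpa using hX.1), add_sub_cancel _ _⟩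
  · intro Y hY
    simp only [coe_filter, Set.mem_ofPred_eq, Fin.sum_univ_castSucc] at hY
    rw [← hY.2]
    exact (congrArg _ (add_sub_cancel_left _ _)).trans (Fin.snoc_init_self Y)
  · intro X _
    exact Fin.init_snoc _ _

lemma card_filter_piFinset_Icc_sum_eq_card_boundedCompositions (m : ℤ) (β M : ℕ) (c : ℤ) :
    #{Y ∈ Fintype.piFinset fun _ : Fin M => Icc (-m) (β - 1 - m) | ∑ k, Y k = c} =
      #(boundedCompositions β M (c + M * m)) := by
  have hsum (x : Fin M → ℕ) : ∑ k, ((x k : ℤ) - m) = (∑ k, x k : ℕ) - M * m := by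
    simp [sum_sub_distrib]
  refine card_nbij' (fun Y k => (Y k + m).toNat) (fun x k => (x k : ℤ) - m) ?_ ?_ ?_ ?_
  · intro Y hY
    simp only [boundedCompositions, coe_filter, Fintype.mem_piFinset, mem_Icc, mem_range,
      Set.mem_ofPred_eq] at hY ⊢
    have hY' : ∀ k, ((Y k + m).toNat : ℤ) - m = Y k := fun k => by have := hY.1 k; omega
    refine ⟨fun k => by have := hY.1 k; omega, ?_⟩
    rw [← hY.2, ← sub_eq_iff_eq_add, ← hsum]
    exact sum_congr rfl fun k _ => hY' k
  · intro x hx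
    simp only [boundedCompositions, coe_filter, Fintype.mem_piFinset, mem_Icc, mem_range,
      Set.mem_ofPred_eq] at hx ⊢
    refine ⟨fun k => by have := hx.1 k; omega, ?_⟩
    rw [hsum, hx.2, add_sub_cancel_right]
  · intro Y hY
    simp only [coe_filter, Fintype.mem_piFinset, mem_Icc, Set.mem_ofPred_eq] at hY
    funext k
    have := hY.1 k
    simp only
    omega
  · intro x _
    funext k
    simp

lemma coeff_geom_sum_pow_eq_card_boundedCompositions (R : Type*) [CommSemiring R] (β M T : ℕ) :
    coeff T ((∑ d ∈ range β, X ^ d : R⟦X⟧) ^ M) = #(boundedCompositions β M T) := by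
  rw [← Fin.prod_const, prod_univ_sum]
  simp only [prod_pow_eq_pow_sum, map_sum, coeff_X_pow]
  rw [sum_boole, boundedCompositions]
  simp only [Nat.cast_inj, eq_comm]

lemma coeff_geom_sum_pow_succ (R : Type*) [CommRing R] (β M T : ℕ) :
    coeff T ((∑ d ∈ range β, X ^ d : R⟦X⟧) ^ (M + 1)) =
      ∑ l ∈ range (M + 1 + 1), (-1) ^ l * ((M + 1).choose l : R) *
        if l * β ≤ T then ((M + (T - l * β)).choose M : R) else 0 := by
  have hS : (∑ d ∈ range β, X ^ d : R⟦X⟧) ^ (M + 1) =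
      (1 - X ^ β) ^ (M + 1) * PowerSeries.mk fun r => ((M + r).choose M : R) := by
    calc (∑ d ∈ range β, X ^ d : R⟦X⟧) ^ (M + 1)
        = (∑ d ∈ range β, X ^ d) ^ (M + 1) *
            ((PowerSeries.mk fun r => ((M + r).choose M : R)) * (1 - X) ^ (M + 1)) := by
          rw [mk_add_choose_mul_one_sub_pow_eq_one, mul_one]
      _ = ((1 - X) * ∑ d ∈ range β, X ^ d) ^ (M + 1) *
            PowerSeries.mk fun r => ((M + r).choose M : R) := by rw [mul_pow]; ac_rfl
      _ = _ := by rw [mul_neg_geom_sum]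
  have hbinom : (1 - X ^ β : R⟦X⟧) ^ (M + 1) =
      ∑ l ∈ range (M + 1 + 1), ((-1) ^ l * ((M + 1).choose l : R)) • X ^ (l * β) := by
    rw [sub_eq_neg_add, add_pow]
    refine sum_congr rfl fun l _ => ?_
    rw [neg_pow, ← pow_mul, one_pow, mul_one, mul_comm l β, smul_eq_C_mul]
    simp only [map_mul, map_pow, map_neg, map_one, map_natCast]
    ring
  rw [hS, hbinom, sum_mul, map_sum]
  refine sum_congr rfl fun l _ => ?_
  rw [smul_mul_assoc, map_smul, coeff_X_pow_mul', coeff_mk, smul_eq_mul]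

lemma card_boundedCompositions_succ (K : Type*) [Field K] (β : ℕ) (hβ : 0 < β) (M : ℕ)
    (T : ℤ) :
    (#(boundedCompositions β (M + 1) T) : K) =
      ∑ l ∈ Icc (0 : ℤ) (T / β),
        (-1 : K) ^ l * (intChoose ((M : ℤ) + 1) l : K) * (intChoose (M + T - l * β) M : K) := by
  rcases lt_or_ge T 0 with hT | hT
  · have hempty : boundedCompositions β (M + 1) T = ∅ :=
      filter_eq_empty_iff.2 fun x _ hx => by omega
    have hquot : T / β < 0 := Int.ediv_neg_of_neg_of_pos hT (by omega)
    rw [hempty, Icc_eq_empty (by omega)]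
    simp
  lift T to ℕ using hT
  rw [← coeff_geom_sum_pow_eq_card_boundedCompositions, coeff_geom_sum_pow_succ]
  set g : ℤ → K := fun l =>
    (-1 : K) ^ l * (intChoose ((M : ℤ) + 1) l : K) * (intChoose (M + T - l * β) M : K)
  have hterm (l : ℕ) : (-1 : K) ^ l * ((M + 1).choose l : K) *
      (if l * β ≤ T then ((M + (T - l * β)).choose M : K) else 0) = g l := by
    have hM : ((M : ℤ) + 1) = ((M + 1 : ℕ) : ℤ) := by push_cast; rfl
    simp only [g, zpow_natCast, hM, intChoose_natCast]
    split_ifs with hl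
    · rw [show (M : ℤ) + T - l * β = ((M + (T - l * β) : ℕ) : ℤ) by push_cast [hl]; ring,
        intChoose_natCast]
      push_cast; rfl
    · rw [intChoose_of_lt (by omega : (M : ℤ) + T - l * β < M)]
      simp
  rw [sum_congr rfl fun l _ => hterm l, sum_range_eq_sum_Icc_natCast g (M + 1)]
  refine sum_Icc_eq_sum_Icc_of_eq_zero g (fun l hl => ?_) (fun l hl => ?_)
  · simp [g, intChoose_of_lt (by omega : (M : ℤ) + 1 < l)]
  · have : (T : ℤ) < l * β := (Int.ediv_lt_iff_lt_mul (by omega)).1 hl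
    simp [g, intChoose_of_lt (by omega : (M : ℤ) + T - l * β < M)]

lemma balN_eq_card_boundedCompositions (b : ℕ) (hodd : Odd b) (n : ℕ) (i j : ℤ) :
    balN b n i j =
      #(boundedCompositions b (n + 1) (j * b - i + (n + 1) * (((b : ℤ) - 1) / 2))) := by
  obtain ⟨m, rfl⟩ := hodd
  have hm : (((2 * m + 1 : ℕ) : ℤ) - 1) / 2 = m := by omega
  have hdigits : ((2 * m + 1 : ℕ) : ℤ) - 1 - m = m := by omega
  have hshift := card_filter_piFinset_Icc_sum_eq_card_boundedCompositions m (2 * m + 1) (n + 1)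
    (j * (2 * m + 1 : ℕ) - i)
  rw [hdigits, card_filter_piFinset_succ_sum_eq] at hshift
  rw [balN, hm, ← Nat.cast_succ, ← hshift]
  congr 1
  refine filter_congr fun X _ => ?_
  rw [mem_Icc]
  omega

theorem stmt1_general (b : ℤ) (hodd : Odd b) (hb : 3 ≤ b) (n : ℕ)
    (i j : ℤ) :
    balK b n i j =
      (1 / (b : ℚ) ^ n) *
        ∑ l ∈ Finset.Icc (0 : ℤ)
            ⌊(j : ℚ) + (((n : ℚ) + 1) / (b : ℚ)) * (((b : ℚ) - 1) / 2) - (i : ℚ) / (b : ℚ)⌋,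
          ((-1 : ℚ) ^ l) * (intChoose ((n : ℤ) + 1) l : ℚ) *
            (intChoose ((n : ℤ) + j * b + (n + 1) * ((b - 1) / 2) - i - l * b) (n : ℤ) : ℚ) := by
  lift b to ℕ using (by omega)
  simp only [balK, Int.cast_natCast]
  set T := j * b - i + (n + 1) * (((b : ℤ) - 1) / 2) with hT
  have hfloor : ⌊(j : ℚ) + ((n + 1) / b) * ((b - 1) / 2) - i / b⌋ = T / b := by
    have hb0 : (b : ℚ) ≠ 0 := by exact_mod_cast (by omega : b ≠ 0)
    rw [← Rat.floor_intCast_div_natCast, hT]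
    congr 1
    push_cast
    rw [Int.cast_div (hodd.sub_odd odd_one).two_dvd two_ne_zero]
    push_cast
    field_simp
    ring
  rw [balN_eq_card_boundedCompositions b (Int.odd_coe_nat b |>.1 hodd),
    card_boundedCompositions_succ ℚ _ (by omega), hfloor, div_eq_inv_mul, one_div]
  refine congrArg _ (sum_congr rfl fun l _ => ?_)
  congr 4
  ring

theorem stmt1 (b : ℤ) (hodd : Odd b) (hb : 3 ≤ b) (n : ℕ) (hneven : Even n) (hn : 2 ≤ n)
    (i j : ℤ) (hi1 : -(n : ℤ) / 2 ≤ i) (hi2 : i ≤ (n : ℤ) / 2)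
    (hj1 : -(n : ℤ) / 2 ≤ j) (hj2 : j ≤ (n : ℤ) / 2) :
    balK b n i j =
      (1 / (b : ℚ) ^ n) *
        ∑ l ∈ Finset.Icc (0 : ℤ)
            ⌊(j : ℚ) + (((n : ℚ) + 1) / (b : ℚ)) * (((b : ℚ) - 1) / 2) - (i : ℚ) / (b : ℚ)⌋,
          ((-1 : ℚ) ^ l) * (intChoose ((n : ℤ) + 1) l : ℚ) *
            (intChoose ((n : ℤ) + j * b + (n + 1) * ((b - 1) / 2) - i - l * b) (n : ℤ) : ℚ) :=
  stmt1_general b hodd hb n i j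
end

section
/- Fix an odd integer b ≥ 3 and an even integer n ≥ 2. For every integer j with 0 ≤ j ≤ n, the vector v_j, defined at each state i with -n/2 ≤ i ≤ n/2 by v_j[i] = Σ_{r=0}^{i+n/2} (-1)^r · C(n+1, r) · (n+2i-2r+1)^{n-j}, is a left eigenvector of the balanced carries transition matrix K with eigenvalue b^{-j}; that is, for every integer k with -n/2 ≤ k ≤ n/2, Σ_{i=-n/2}^{n/2} v_j[i] · K(i,k) = b^{-j} · v_j[k]. -/
/-- The left eigenvector `v_j` of the balanced carries chain, evaluated at state `i`:
`v_j[i] = Σ_{r=0}^{i+n/2} (-1)^r C(n+1,r) (n+2i-2r+1)^{n-j}`. -/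
def leftEig (n : ℕ) (j : ℕ) (i : ℤ) : ℤ :=
  ∑ r ∈ Finset.range ((i + (n : ℤ) / 2).toNat + 1),
    (-1 : ℤ) ^ r * (Nat.choose (n + 1) r : ℤ) * ((n : ℤ) + 2 * i - 2 * r + 1) ^ (n - j)

open Finset Function fwdDiff

lemma sum_piFinset_const_succ {α G : Type*} [AddCommMonoid G] {n : ℕ} (s : Finset α)
    (f : (Fin (n + 1) → α) → G) :
    ∑ X ∈ Fintype.piFinset (fun _ => s), f X
      = ∑ e ∈ s, ∑ Y ∈ Fintype.piFinset (fun _ : Fin n => s), f (Fin.cons e Y) := by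
  have := filter_piFinset_eq_map_consEquiv (fun _ : Fin (n + 1) => s) (fun _ => True)
  simp only [filter_true] at this
  rw [this, sum_map, sum_product]
  rfl

section AddCommGroup

variable {G : Type*} [AddCommGroup G]

lemma fwdDiff_iter_congr {f g : ℤ → G} {N : ℕ} {y : ℤ}
    (h : ∀ k ≤ N, f (y + k) = g (y + k)) : (Δ_[1])^[N] f y = (Δ_[1])^[N] g y := by
  simp only [fwdDiff_iter_eq_sum_shift, nsmul_one]
  exact sum_congr rfl fun k hk => by rw [h k (Nat.lt_succ_iff.mp (mem_range.mp hk))]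

lemma fwdDiff_iter_apply_mul (h : ℤ) (f : ℤ → G) (N : ℕ) (k : ℤ) :
    (Δ_[h])^[N] f (k * h) = (Δ_[1])^[N] (fun u => f (u * h)) k := by
  simp only [fwdDiff_iter_eq_sum_shift, add_mul, one_mul, smul_mul_assoc]

lemma sum_Ico_fwdDiff (f : ℤ → G) {a b : ℤ} (hab : a ≤ b) :
    ∑ s ∈ Ico a b, Δ_[1] f s = f b - f a := by
  induction b, hab using Int.leInduction with
  | base => simp
  | succ b hab ih =>
    rw [← insert_Ico_right_eq_Ico_add_one_of_not_isMax hab (not_isMax b), sum_insert (by simp),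
      ih, fwdDiff]
    abel

noncomputable def boxSum (c : ℤ) (φ : ℤ → G) (t : ℤ) : G := ∑ e ∈ Icc (-c) c, φ (t - e)

lemma boxSum_fwdDiff_comm (c h : ℤ) (φ : ℤ → G) :
    boxSum c (Δ_[h] φ) = Δ_[h] (boxSum c φ) := by
  ext t
  simp only [boxSum, fwdDiff, ← sum_sub_distrib, sub_add_eq_add_sub]

lemma boxSum_fwdDiff_one {c : ℤ} (hc : 0 ≤ c) (φ : ℤ → G) :
    boxSum c (Δ_[1] φ) = Δ_[2 * c + 1] (fun t => φ (t - c)) := by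
  ext t
  have := sum_Ico_fwdDiff (fun e => -φ (t - e + 1)) (a := -c) (b := c + 1) (by omega)
  simp only [boxSum, fwdDiff] at this ⊢
  rw [← Ico_add_one_right_eq_Icc]
  convert this using 1
  · exact sum_congr rfl fun e _ => by ring_nf; abel
  · ring_nf; abel

lemma boxSum_iterate_fwdDiff_iterate {c : ℤ} (hc : 0 ≤ c) (N : ℕ) (ψ : ℤ → G) :
    (boxSum c)^[N] ((Δ_[1])^[N] ψ) = (Δ_[2 * c + 1])^[N] (fun t => ψ (t - N * c)) := by
  set T : (ℤ → G) → ℤ → G := fun φ t => φ (t - c)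
  have hT : ∀ n : ℕ, T^[n] ψ = fun t => ψ (t - n * c) := by
    intro n
    induction n with
    | zero => simp
    | succ n ih => ext t; rw [iterate_succ_apply', ih]; simp only [T]; push_cast; ring_nf
  have hbox : Function.Commute (boxSum (G := G) c) (fwdDiff 1) :=
    fun φ => boxSum_fwdDiff_comm c 1 φ
  have hshift : Function.Commute (fwdDiff (2 * c + 1)) T := fun φ => by
    ext t; simp only [T, fwdDiff, sub_add_eq_add_sub]
  calc (boxSum c)^[N] ((Δ_[1])^[N] ψ) = (boxSum c ∘ fwdDiff 1)^[N] ψ := by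
        rw [hbox.comp_iterate]; rfl
    _ = (fwdDiff (2 * c + 1) ∘ T)^[N] ψ := by
        rw [show boxSum c ∘ fwdDiff 1 = fwdDiff (2 * c + 1) ∘ T from
          funext fun φ => boxSum_fwdDiff_one hc φ]
    _ = _ := by rw [hshift.comp_iterate, comp_apply, hT]

lemma sum_piFinset_Icc_eq_boxSum_iterate (c : ℤ) (n : ℕ) (φ : ℤ → G) (t : ℤ) :
    ∑ X ∈ Fintype.piFinset (fun _ : Fin n => Icc (-c) c), φ (t - ∑ k, X k)
      = (boxSum c)^[n] φ t := by
  induction n generalizing t with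
  | zero => simp
  | succ n ih =>
    rw [sum_piFinset_const_succ, iterate_succ_apply', boxSum]
    refine sum_congr rfl fun e _ => ?_
    rw [← ih]
    refine sum_congr rfl fun Y _ => ?_
    rw [Fin.sum_cons, sub_add_eq_sub_sub]

lemma sum_ite_add_mem_Icc_eq_boxSum {V : ℤ → G} {I : Finset ℤ} (hV : ∀ i ∉ I, V i = 0)
    (c t x : ℤ) :
    ∑ i ∈ I, (if t - c ≤ i + x ∧ i + x ≤ t + c then V i else 0) = boxSum c V (t - x) := by
  rw [← sum_filter, boxSum]
  symm
  refine sum_bij_ne_zero (fun e _ _ => t - x - e) (fun e he hV0 => ?_)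
    (fun _ _ _ _ _ _ h => by omega) (fun i hi hV0 => ⟨t - x - i, ?_, ?_, by ring_nf⟩)
    (fun _ _ _ => rfl)
  · rw [mem_Icc] at he
    exact mem_filter.mpr ⟨by_contra fun h => hV0 (hV _ h), by omega, by omega⟩
  · have := (mem_filter.mp hi).2
    exact mem_Icc.mpr ⟨by omega, by omega⟩
  · simpa using hV0

end AddCommGroup

section Ring

variable {R : Type*} [Ring R]

lemma sum_mul_balN_eq_boxSum_iterate {V : ℤ → R} {I : Finset ℤ} (hV : ∀ i ∉ I, V i = 0)
    (c : ℤ) (n : ℕ) (k : ℤ) :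
    ∑ i ∈ I, V i * balN (2 * c + 1) n i k = (boxSum c)^[n + 1] V (k * (2 * c + 1)) := by
  have hc : (2 * c + 1 - 1) / 2 = c := by omega
  simp only [balN, hc, natCast_card_filter, mul_sum, mul_ite, mul_one, mul_zero]
  rw [sum_comm, iterate_succ_apply, ← sum_piFinset_Icc_eq_boxSum_iterate]
  exact sum_congr rfl fun X _ => sum_ite_add_mem_Icc_eq_boxSum hV c _ _

theorem sum_fwdDiff_iter_mul_balN {c : ℤ} (hc : 0 ≤ c) (n : ℕ) {ψ : ℤ → R} {μ : R}
    (hψ : ∀ u, ψ (u * (2 * c + 1) - (n + 1) * c) = μ * ψ u) {I : Finset ℤ}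
    (hI : ∀ i ∉ I, (Δ_[1])^[n + 1] ψ i = 0) (k : ℤ) :
    ∑ i ∈ I, (Δ_[1])^[n + 1] ψ i * balN (2 * c + 1) n i k = μ * (Δ_[1])^[n + 1] ψ k := by
  rw [sum_mul_balN_eq_boxSum_iterate hI, boxSum_iterate_fwdDiff_iterate hc,
    fwdDiff_iter_apply_mul]
  push_cast
  simp_rw [hψ]
  exact congrFun (fwdDiff_iter_const_smul 1 μ ψ (n + 1)) k

end Ring

def truncPow (d : ℕ) (t : ℤ) : ℤ := if 0 < t then (2 * t - 1) ^ d else 0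

lemma truncPow_mul_sub (d : ℕ) {c : ℤ} (hc : 0 ≤ c) (u : ℤ) :
    truncPow d (u * (2 * c + 1) - c) = (2 * c + 1) ^ d * truncPow d u := by
  unfold truncPow
  by_cases hu : 0 < u
  · rw [if_pos hu, if_pos (by nlinarith), ← mul_pow]
    ring
  · rw [if_neg hu, if_neg (by nlinarith), mul_zero]

lemma fwdDiff_iter_truncPow_of_le {d N : ℕ} {y : ℤ} (hy : y + N ≤ 0) :
    (Δ_[1])^[N] (truncPow d) y = 0 := by
  rw [fwdDiff_iter_eq_sum_shift]
  refine sum_eq_zero fun k hk => ?_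
  have : ¬ 0 < y + k := by simp only [mem_range] at hk; omega
  simp [truncPow, this]

open Polynomial in
lemma fwdDiff_iter_truncPow_of_pos {d N : ℕ} (hd : d < N) {y : ℤ} (hy : 0 < y) :
    (Δ_[1])^[N] (truncPow d) y = 0 := by
  have hP : (((2 : ℤ[X]) * X - 1) ^ d).natDegree < N := lt_of_le_of_lt (by compute_degree) hd
  rw [fwdDiff_iter_congr (g := fun t => (((2 : ℤ[X]) * X - 1) ^ d).eval t) fun k _ => by
      simp [truncPow, show 0 < y + k by omega],
    fwdDiff_iter_eq_zero_of_degree_lt hP, Pi.zero_apply]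

lemma fwdDiff_iter_truncPow_eq_sum (d N : ℕ) (y : ℤ) :
    (Δ_[1])^[N] (truncPow d) y
      = ∑ r ∈ range (N + 1), (-1) ^ r * (N.choose r : ℤ) * truncPow d (y + N - r) := by
  rw [fwdDiff_iter_eq_sum_shift, ← sum_range_reflect]
  refine sum_congr rfl fun r hr => ?_
  have hr : r ≤ N := Nat.lt_succ_iff.mp (mem_range.mp hr)
  rw [Nat.add_sub_cancel, Nat.sub_sub_self hr, Nat.choose_symm hr, smul_eq_mul, nsmul_one,
    Nat.cast_sub hr, add_sub_assoc]

def eigVec (m d : ℕ) : ℤ → ℤ := (Δ_[1])^[2 * m + 1] fun t => truncPow d (t - m)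

lemma eigVec_apply (m d : ℕ) (i : ℤ) :
    eigVec m d i = (Δ_[1])^[2 * m + 1] (truncPow d) (i - m) :=
  fwdDiff_iter_comp_add 1 (truncPow d) (-m) _ i

lemma eigVec_eq_zero {m d : ℕ} (hd : d ≤ 2 * m) {i : ℤ} (hi : i ∉ Icc (-(m : ℤ)) m) :
    eigVec m d i = 0 := by
  rw [mem_Icc, not_and_or, not_le, not_le] at hi
  rw [eigVec_apply]
  rcases hi with hi | hi
  · exact fwdDiff_iter_truncPow_of_le (by push_cast; omega)
  · exact fwdDiff_iter_truncPow_of_pos (by omega) (by omega)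

lemma sum_eigVec_mul_balN {c : ℤ} (hc : 0 ≤ c) {m d : ℕ} (hd : d ≤ 2 * m) (k : ℤ) :
    ∑ i ∈ Icc (-(m : ℤ)) m, eigVec m d i * balN (2 * c + 1) (2 * m) i k
      = (2 * c + 1) ^ d * eigVec m d k :=
  sum_fwdDiff_iter_mul_balN hc (2 * m)
    (fun u => by push_cast; rw [← truncPow_mul_sub _ hc]; ring_nf) (fun _ => eigVec_eq_zero hd) k

lemma leftEig_eq_eigVec (m j : ℕ) {i : ℤ} (hi : -m ≤ i) :
    leftEig (2 * m) j i = eigVec m (2 * m - j) i := by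
  set H : ℕ → ℤ := fun r =>
    (-1) ^ r * ((2 * m + 1).choose r : ℤ) * truncPow (2 * m - j) (i + m + 1 - r)
  set A := (i + m).toNat
  have hH_trunc : ∀ r, A < r → H r = 0 := fun r hr => by
    simp only [H, truncPow, if_neg (show ¬ 0 < i + m + 1 - r by omega), mul_zero]
  have hH_choose : ∀ r, 2 * m + 1 < r → H r = 0 := fun r hr => by
    simp [H, Nat.choose_eq_zero_of_lt hr]
  calc leftEig (2 * m) j i = ∑ r ∈ range (A + 1), H r := by
        rw [leftEig, show (i + (2 * m : ℕ) / 2).toNat = A by congr 1; omega]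
        refine sum_congr rfl fun r hr => ?_
        rw [mem_range] at hr
        simp only [H, truncPow, if_pos (show 0 < i + m + 1 - r by omega)]
        push_cast
        ring_nf
    _ = ∑ r ∈ range (A + 2 * m + 2), H r :=
        sum_subset (range_subset_range.2 (by omega)) fun r _ hr =>
          hH_trunc r (by simp at hr; omega)
    _ = ∑ r ∈ range (2 * m + 2), H r :=
        (sum_subset (range_subset_range.2 (by omega)) fun r _ hr =>
          hH_choose r (by simp at hr; omega)).symm
    _ = eigVec m (2 * m - j) i := by
        rw [eigVec_apply, fwdDiff_iter_truncPow_eq_sum]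
        refine sum_congr rfl fun r _ => ?_
        simp only [H]
        push_cast
        ring_nf

theorem stmt2_general (b : ℤ) (hodd : Odd b) (hb : 3 ≤ b) (n : ℕ) (hneven : Even n)
    (j : ℕ) (hj : j ≤ n)
    (k : ℤ) (hk1 : -(n : ℤ) / 2 ≤ k) :
    ∑ i ∈ Finset.Icc (-(n : ℤ) / 2) ((n : ℤ) / 2),
        (leftEig n j i : ℚ) * balK b n i k
      = (1 / (b : ℚ) ^ j) * (leftEig n j k : ℚ) := by
  obtain ⟨c, rfl⟩ := hodd
  obtain ⟨m, rfl⟩ := hneven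
  rw [← two_mul] at hj hk1 ⊢
  have hk : -(m : ℤ) ≤ k := by omega
  rw [show -((2 * m : ℕ) : ℤ) / 2 = -m by omega, show ((2 * m : ℕ) : ℤ) / 2 = m by omega]
  have hb0 : (2 * c + 1 : ℚ) ≠ 0 := by exact_mod_cast (by omega : 2 * c + 1 ≠ 0)
  calc ∑ i ∈ Icc (-(m : ℤ)) m, (leftEig (2 * m) j i : ℚ) * balK (2 * c + 1) (2 * m) i k
      = ((∑ i ∈ Icc (-(m : ℤ)) m, eigVec m (2 * m - j) i * balN (2 * c + 1) (2 * m) i k : ℤ) : ℚ)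
          / ((2 * c + 1 : ℤ) : ℚ) ^ (2 * m) := by
        rw [Int.cast_sum, sum_div]
        refine sum_congr rfl fun i hi => ?_
        rw [leftEig_eq_eigVec m j (mem_Icc.mp hi).1, balK]
        push_cast
        ring
    _ = 1 / ((2 * c + 1 : ℤ) : ℚ) ^ j * (leftEig (2 * m) j k : ℚ) := by
        rw [sum_eigVec_mul_balN (by omega) (by omega), leftEig_eq_eigVec m j hk,
          ← pow_sub_mul_pow _ hj]
        push_cast
        field_simp

theorem stmt2 (b : ℤ) (hodd : Odd b) (hb : 3 ≤ b) (n : ℕ) (hneven : Even n) (hn : 2 ≤ n)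
    (j : ℕ) (hj : j ≤ n)
    (k : ℤ) (hk1 : -(n : ℤ) / 2 ≤ k) (hk2 : k ≤ (n : ℤ) / 2) :
    ∑ i ∈ Finset.Icc (-(n : ℤ) / 2) ((n : ℤ) / 2),
        (leftEig n j i : ℚ) * balK b n i k
      = (1 / (b : ℚ) ^ j) * (leftEig n j k : ℚ) :=
  stmt2_general b hodd hb n hneven j hj k hk1
end

section
/- Fix an odd integer b ≥ 3 and an even integer n ≥ 2. Define π(i) = Ā(n, i+n/2)/(2^n · n!) for each integer i with -n/2 ≤ i ≤ n/2, where Ā(n,j) = Σ_{r=0}^{j} (-1)^r · C(n+1, r) · (2j-2r+1)^n. Then π is the stationary distribution of the balanced carries transition matrix K: Σ_{i=-n/2}^{n/2} π(i) = 1, and for every integer k with -n/2 ≤ k ≤ n/2, Σ_{i=-n/2}^{n/2} π(i) · K(i,k) = π(k). -/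
/-- The signed Eulerian number `Ā(n,j) = Σ_{r=0}^{j} (-1)^r C(n+1,r) (2j-2r+1)^n`. -/
def signedEulerian (n j : ℕ) : ℤ :=
  ∑ r ∈ Finset.range (j + 1),
    (-1 : ℤ) ^ r * (Nat.choose (n + 1) r : ℤ) * (2 * (j : ℤ) - 2 * r + 1) ^ n

/-- The stationary distribution `π(i) = Ā(n, i+n/2)/(2^n n!)` of the balanced carries chain. -/
def balPi (n : ℕ) (i : ℤ) : ℚ :=
  (signedEulerian n (i + (n : ℤ) / 2).toNat : ℚ) / (2 ^ n * Nat.factorial n)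

open Finset Function Polynomial fwdDiff

section BwdDiff
variable {M G : Type*} [AddCommGroup M] [AddCommGroup G]

def bwdDiff (h : M) (f : M → G) : M → G := fun u => f u - f (u - h)

lemma bwdDiff_iter_eq_fwdDiff_iter (h : M) (f : M → G) (N : ℕ) (u : M) :
    (bwdDiff h)^[N] f u = (fwdDiff h)^[N] f (u - N • h) := by
  induction N generalizing u with
  | zero => simp
  | succ N ih =>
    rw [iterate_succ_apply', iterate_succ_apply', bwdDiff, ih, ih, fwdDiff, succ_nsmul,
      sub_add_eq_sub_sub, sub_add_cancel, sub_right_comm]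

lemma bwdDiff_iter_eq_sum (h : M) (f : M → G) (N : ℕ) (u : M) :
    (bwdDiff h)^[N] f u
      = ∑ r ∈ range (N + 1), ((-1 : ℤ) ^ r * N.choose r) • f (u - r • h) := by
  rw [bwdDiff_iter_eq_fwdDiff_iter, fwdDiff_iter_eq_sum_shift, ← sum_range_reflect]
  refine sum_congr rfl fun r hr => ?_
  obtain ⟨s, rfl⟩ := Nat.exists_eq_add_of_le (Nat.lt_succ_iff.1 (mem_range.1 hr))
  rw [Nat.add_sub_cancel, Nat.add_sub_cancel_left, Nat.add_sub_cancel, Nat.choose_symm_add,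
    add_nsmul, sub_add_eq_sub_sub, sub_add_cancel]

end BwdDiff

section Linear
variable {M R : Type*} [AddCommGroup M] [Ring R]

lemma bwdDiff_iter_const_mul (a : R) (f : M → R) (h : M) (N : ℕ) (u : M) :
    (bwdDiff h)^[N] (fun u => a * f u) u = a * (bwdDiff h)^[N] f u := by
  induction N generalizing u with
  | zero => rfl
  | succ N ih => simp only [iterate_succ_apply', bwdDiff, ih, mul_sub]

lemma bwdDiff_iter_sum_mul_shift {ι : Type*} (s : Finset ι) (c : ι → R) (a : ι → M)
    (f : M → R) (h : M) (N : ℕ) (u : M) :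
    (bwdDiff h)^[N] (fun u => ∑ j ∈ s, c j * f (u - a j)) u
      = ∑ j ∈ s, c j * (bwdDiff h)^[N] f (u - a j) := by
  induction N generalizing u with
  | zero => rfl
  | succ N ih =>
    simp only [iterate_succ_apply', bwdDiff, ih, ← sum_sub_distrib, ← mul_sub, sub_right_comm]

end Linear

lemma bwdDiff_iter_comp_mul_add {R G : Type*} [Ring R] [AddCommGroup G] (f : R → G) (b c : R)
    (N : ℕ) (t : R) :
    (bwdDiff 1)^[N] (fun t => f (b * t + c)) t = (bwdDiff b)^[N] f (b * t + c) := by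
  induction N generalizing t with
  | zero => rfl
  | succ N ih =>
    rw [iterate_succ_apply', iterate_succ_apply', bwdDiff, bwdDiff, ih, ih, mul_sub, mul_one,
      sub_add_eq_add_sub]

section Causal
variable {G : Type*} [AddCommGroup G]

lemma bwdDiff_iter_apply_of_neg {f : ℤ → G} (hf : ∀ u < 0, f u = 0) {h : ℤ} (hh : 0 ≤ h)
    (N : ℕ) {u : ℤ} (hu : u < 0) : (bwdDiff h)^[N] f u = 0 := by
  induction N generalizing u with
  | zero => exact hf u hu
  | succ N ih => rw [iterate_succ_apply', bwdDiff, ih hu, ih (by omega), sub_zero]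

lemma eq_of_bwdDiff_iter_eq {f g : ℤ → G} (hf : ∀ u < 0, f u = 0) (hg : ∀ u < 0, g u = 0)
    (N : ℕ) (hfg : (bwdDiff 1)^[N] f = (bwdDiff 1)^[N] g) : f = g := by
  induction N generalizing f g with
  | zero => exact hfg
  | succ N ih =>
    have step := congr_fun (ih (fun _ hu => bwdDiff_iter_apply_of_neg hf zero_le_one 1 hu)
      (fun _ hu => bwdDiff_iter_apply_of_neg hg zero_le_one 1 hu) hfg)
    have hnat : ∀ k : ℕ, f k = g k := by
      intro k
      induction k with
      | zero => simpa [bwdDiff, hf, hg] using step 0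
      | succ k ihk => simpa [bwdDiff, ihk] using step (k + 1)
    ext u
    rcases lt_or_ge u 0 with hu | hu
    · rw [hf u hu, hg u hu]
    · obtain ⟨k, rfl⟩ := Int.eq_ofNat_of_zero_le hu
      exact hnat k

lemma sum_range_bwdDiff (g : ℤ → G) (T : ℕ) :
    ∑ j ∈ range (T + 1), bwdDiff 1 g j = g T - g (-1) := by
  simpa [bwdDiff] using sum_range_sub (fun i : ℕ => g (i - 1)) (T + 1)

lemma sum_Icc_bwdDiff_one (g : ℤ → G) {b : ℤ} (hb : 0 ≤ b) (u : ℤ) :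
    ∑ v ∈ Icc 0 (b - 1), bwdDiff 1 g (u - v) = bwdDiff b g u := by
  rw [Int.Icc_eq_finset_map, sum_map, sub_add_cancel, sub_zero]
  have := sum_range_sub' (fun i : ℕ => g (u - i)) b.toNat
  simp only [Embedding.trans_apply, Nat.castEmbedding_apply, addLeftEmbedding_apply, zero_add,
    bwdDiff, sub_sub, Nat.cast_add, Nat.cast_one, Int.toNat_of_nonneg hb] at this ⊢
  simpa using this

end Causal

lemma two_mul_add_one_pow_eq_eval (n : ℕ) :
    (fun u : ℤ => (2 * u + 1) ^ n) = ((C 2 * X + C 1 : ℤ[X]) ^ n).eval := by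
  ext u
  simp

lemma natDegree_two_mul_X_add_one_pow (n : ℕ) : ((C 2 * X + C 1 : ℤ[X]) ^ n).natDegree = n := by
  rw [natDegree_pow, natDegree_linear two_ne_zero, mul_one]

lemma bwdDiff_iter_succ_two_mul_add_one_pow (n : ℕ) :
    (bwdDiff 1)^[n + 1] (fun u : ℤ => (2 * u + 1) ^ n) = 0 := by
  ext u
  rw [bwdDiff_iter_eq_fwdDiff_iter, two_mul_add_one_pow_eq_eval,
    fwdDiff_iter_eq_zero_of_degree_lt (by rw [natDegree_two_mul_X_add_one_pow]; omega)]
  rfl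

lemma bwdDiff_iter_two_mul_add_one_pow (n : ℕ) (u : ℤ) :
    (bwdDiff 1)^[n] (fun u : ℤ => (2 * u + 1) ^ n) u = 2 ^ n * n.factorial := by
  have h := fwdDiff_iter_degree_eq_factorial ((C 2 * X + C 1 : ℤ[X]) ^ n)
  rw [natDegree_two_mul_X_add_one_pow, leadingCoeff_pow, leadingCoeff_linear two_ne_zero] at h
  rw [bwdDiff_iter_eq_fwdDiff_iter, two_mul_add_one_pow_eq_eval, h]
  simp

def causalChoose (n : ℕ) (u : ℤ) : ℤ := if 0 ≤ u then ((u.toNat + n).choose n : ℤ) else 0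

lemma bwdDiff_causalChoose_zero :
    bwdDiff 1 (causalChoose 0) = fun u => if u = 0 then 1 else 0 := by
  ext u
  simp only [bwdDiff, causalChoose, Nat.add_zero, Nat.choose_zero_right, Nat.cast_one]
  split_ifs <;> omega

lemma bwdDiff_causalChoose_succ (n : ℕ) : bwdDiff 1 (causalChoose (n + 1)) = causalChoose n := by
  ext u
  rcases lt_or_ge u 0 with hu | hu
  · simp only [bwdDiff, causalChoose, if_neg hu.not_ge, if_neg (by omega : ¬ (0 : ℤ) ≤ u - 1),
      sub_zero]
  obtain ⟨k, rfl⟩ := Int.eq_ofNat_of_zero_le hu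
  cases k with
  | zero => simp [bwdDiff, causalChoose]
  | succ k =>
    have hk : ((k + 1 : ℕ) : ℤ) - 1 = k := by push_cast; ring
    simp only [bwdDiff, causalChoose, Nat.cast_nonneg, if_true, Int.toNat_natCast, hk]
    rw [sub_eq_iff_eq_add, ← Nat.cast_add, Nat.cast_inj,
      show k + 1 + (n + 1) = k + 1 + n + 1 by ring,
      Nat.choose_succ_succ, show k + (n + 1) = k + 1 + n by ring]

lemma bwdDiff_iter_causalChoose (n : ℕ) :
    (bwdDiff 1)^[n + 1] (causalChoose n) = fun u => if u = 0 then 1 else 0 := by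
  induction n with
  | zero => exact bwdDiff_causalChoose_zero
  | succ n ih => rw [iterate_succ_apply, bwdDiff_causalChoose_succ, ih]

def causalOddPow (n : ℕ) (u : ℤ) : ℤ := if 0 ≤ u then (2 * u + 1) ^ n else 0

lemma causalOddPow_of_neg (n : ℕ) {u : ℤ} (hu : u < 0) : causalOddPow n u = 0 :=
  if_neg hu.not_ge

lemma causalOddPow_mul_add {b h : ℤ} (hb : b = 2 * h + 1) (hh : 0 ≤ h) (n : ℕ) (t : ℤ) :
    causalOddPow n (b * t + h) = b ^ n * causalOddPow n t := by
  rcases lt_or_ge t 0 with ht | ht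
  · rw [causalOddPow_of_neg n ht, causalOddPow_of_neg n (by nlinarith), mul_zero]
  · rw [causalOddPow, causalOddPow, if_pos ht, if_pos (by nlinarith), ← mul_pow]
    congr 1
    rw [hb]
    ring

lemma bwdDiff_iter_causalOddPow_of_le (N n : ℕ) {u : ℤ} (hu : N ≤ u) :
    (bwdDiff 1)^[N] (causalOddPow n) u = (bwdDiff 1)^[N] (fun u : ℤ => (2 * u + 1) ^ n) u := by
  rw [bwdDiff_iter_eq_sum, bwdDiff_iter_eq_sum]
  refine sum_congr rfl fun r hr => ?_
  have := mem_range.1 hr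
  rw [causalOddPow, if_pos (by simp; omega)]

lemma bwdDiff_iter_causalOddPow_mul_add {b h : ℤ} (hb : b = 2 * h + 1) (hh : 0 ≤ h) (N n : ℕ)
    (t : ℤ) :
    (bwdDiff b)^[N] (causalOddPow n) (b * t + h) = b ^ n * (bwdDiff 1)^[N] (causalOddPow n) t := by
  rw [← bwdDiff_iter_comp_mul_add]
  simp_rw [causalOddPow_mul_add hb hh]
  exact bwdDiff_iter_const_mul _ _ _ _ _

def signedEulerianFun (n : ℕ) : ℤ → ℤ := (bwdDiff 1)^[n + 1] (causalOddPow n)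

lemma signedEulerian_eq_signedEulerianFun (n j : ℕ) :
    signedEulerian n j = signedEulerianFun n j := by
  set B : ℕ → ℤ := fun r => (-1) ^ r * (n + 1).choose r * causalOddPow n (j - r)
  calc signedEulerian n j = ∑ r ∈ range (j + 1), B r := by
        refine sum_congr rfl fun r hr => ?_
        have := mem_range.1 hr
        simp only [B, causalOddPow, if_pos (by omega : (0 : ℤ) ≤ j - r)]
        ring_nf
    _ = ∑ r ∈ range (n + 1 + 1), B r := by
        rcases le_total (j + 1) (n + 1 + 1) with h | h
        · refine sum_subset (range_subset_range.2 h) fun r _ hr => ?_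
          simp only [mem_range, not_lt] at hr
          simp only [B, causalOddPow_of_neg n (by omega : (j : ℤ) - r < 0), mul_zero]
        · refine (sum_subset (range_subset_range.2 h) fun r _ hr => ?_).symm
          simp only [mem_range, not_lt] at hr
          simp only [B, Nat.choose_eq_zero_of_lt (by omega : n + 1 < r), Nat.cast_zero, mul_zero,
            zero_mul]
    _ = signedEulerianFun n j := by
        simp [signedEulerianFun, bwdDiff_iter_eq_sum, B]

lemma signedEulerianFun_eq_zero (n : ℕ) {u : ℤ} (hu : u < 0 ∨ n < u) :
    signedEulerianFun n u = 0 := by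
  rcases hu with hu | hu
  · exact bwdDiff_iter_apply_of_neg (fun _ => causalOddPow_of_neg n) zero_le_one _ hu
  · rw [signedEulerianFun, bwdDiff_iter_causalOddPow_of_le _ _ (by omega),
      bwdDiff_iter_succ_two_mul_add_one_pow]
    rfl

lemma sum_signedEulerian (n : ℕ) :
    ∑ j ∈ range (n + 1), signedEulerian n j = 2 ^ n * n.factorial := by
  simp_rw [signedEulerian_eq_signedEulerianFun, signedEulerianFun, iterate_succ_apply']
  rw [sum_range_bwdDiff, bwdDiff_iter_apply_of_neg (fun _ => causalOddPow_of_neg n) zero_le_one n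
    (u := -1) (by norm_num), sub_zero, bwdDiff_iter_causalOddPow_of_le n n le_rfl,
    bwdDiff_iter_two_mul_add_one_pow]

lemma sum_signedEulerianFun_mul_causalChoose (n : ℕ) (u : ℤ) :
    ∑ j ∈ range (n + 1), signedEulerianFun n j * causalChoose n (u - j) = causalOddPow n u := by
  set W : ℤ → ℤ :=
    fun u => ∑ j ∈ range (n + 1), signedEulerianFun n j * causalChoose n (u - j)
  have hW : ∀ u < 0, W u = 0 := fun u hu => sum_eq_zero fun j _ => by
    rw [causalChoose, if_neg (by omega), mul_zero]
  suffices W = causalOddPow n from congr_fun this u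
  refine eq_of_bwdDiff_iter_eq hW (fun _ => causalOddPow_of_neg n) (n + 1) (funext fun u => ?_)
  rw [bwdDiff_iter_sum_mul_shift, bwdDiff_iter_causalChoose]
  change _ = signedEulerianFun n u
  simp only [mul_ite, mul_one, mul_zero, sub_eq_zero]
  by_cases hu : 0 ≤ u ∧ u ≤ n
  · obtain ⟨k, rfl⟩ := Int.eq_ofNat_of_zero_le hu.1
    simp only [Nat.cast_inj, sum_ite_eq, mem_range]
    rw [if_pos (by omega)]
  · rw [sum_eq_zero fun j hj => if_neg ?_, signedEulerianFun_eq_zero n (by omega)]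
    have := mem_range.1 hj
    omega

noncomputable def boxCount (b : ℤ) (n : ℕ) (M : ℤ) : ℕ :=
  #{x ∈ Fintype.piFinset fun _ : Fin n => Icc (0 : ℤ) (b - 1) | ∑ k, x k ≤ M}

lemma boxCount_zero (b M : ℤ) : boxCount b 0 M = if 0 ≤ M then 1 else 0 := by
  split_ifs <;> simp [boxCount, *]

lemma boxCount_succ (b : ℤ) (n : ℕ) (M : ℤ) :
    boxCount b (n + 1) M = ∑ v ∈ Icc (0 : ℤ) (b - 1), boxCount b n (M - v) := by
  have hmap :
      {x ∈ Fintype.piFinset fun _ : Fin (n + 1) => Icc (0 : ℤ) (b - 1) | ∑ k, x k ≤ M}.map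
        (Fin.consEquiv fun _ => ℤ).symm.toEmbedding
      = {p ∈ Icc (0 : ℤ) (b - 1) ×ˢ Fintype.piFinset fun _ : Fin n => Icc (0 : ℤ) (b - 1) |
          p.1 + ∑ k, p.2 k ≤ M} := by
    ext ⟨v, y⟩
    simp [Fin.forall_iff_succ, Fin.sum_univ_succ, and_assoc]
  rw [boxCount, ← card_map, hmap, card_filter, sum_product]
  refine sum_congr rfl fun v _ => ?_
  rw [boxCount, card_filter]
  simp only [← le_sub_iff_add_le']

lemma boxCount_eq_bwdDiff_iter {b : ℤ} (hb : 0 ≤ b) (n : ℕ) (M : ℤ) :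
    (boxCount b n M : ℤ) = (bwdDiff b)^[n] (causalChoose n) M := by
  induction n generalizing M with
  | zero => rw [boxCount_zero]; simp [causalChoose]
  | succ n ih =>
    have hP : bwdDiff b (causalChoose (n + 1))
        = fun u => ∑ v ∈ Icc 0 (b - 1), 1 * causalChoose n (u - v) := by
      ext u
      simp only [one_mul, ← sum_Icc_bwdDiff_one _ hb, bwdDiff_causalChoose_succ]
    rw [boxCount_succ, Nat.cast_sum, iterate_succ_apply, hP, bwdDiff_iter_sum_mul_shift]
    simp only [ih, one_mul]

lemma sum_signedEulerianFun_mul_boxCount {b : ℤ} (hb : 0 ≤ b) (n : ℕ) (c : ℤ) :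
    ∑ j ∈ range (n + 1), signedEulerianFun n j * boxCount b n (c - j)
      = (bwdDiff b)^[n] (causalOddPow n) c := by
  simp_rw [boxCount_eq_bwdDiff_iter hb]
  rw [← bwdDiff_iter_sum_mul_shift]
  simp_rw [sum_signedEulerianFun_mul_causalChoose]

lemma card_filter_le_and_le_eq_sub {α : Type*} (s : Finset α) (f : α → ℤ) {lo hi : ℤ}
    (h : lo ≤ hi + 1) :
    (#{x ∈ s | lo ≤ f x ∧ f x ≤ hi} : ℤ)
      = #{x ∈ s | f x ≤ hi} - #{x ∈ s | f x ≤ lo - 1} := by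
  simp only [card_filter, Nat.cast_sum, ← sum_sub_distrib]
  refine sum_congr rfl fun x _ => ?_
  split_ifs <;> omega

lemma balN_eq_card_box {b h : ℤ} (hb : b = 2 * h + 1) (n : ℕ) (i k : ℤ) :
    balN b n i k = #{x ∈ Fintype.piFinset fun _ : Fin n => Icc (0 : ℤ) (b - 1) |
      k * b - h - i + n * h ≤ ∑ m, x m ∧ ∑ m, x m ≤ k * b + h - i + n * h} := by
  have hh : (b - 1) / 2 = h := by omega
  rw [balN, hh, ← card_map (addRightEmbedding fun _ => h)]
  congr 1
  ext x
  have hsum (X : Fin n → ℤ) :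
      ∑ m, (X + fun _ => h : Fin n → ℤ) m = ∑ m, X m + n * h := by
    simp [sum_add_distrib]
  simp only [mem_map, mem_filter, Fintype.mem_piFinset, mem_Icc, addRightEmbedding_apply]
  constructor
  · rintro ⟨X, ⟨hX, h1, h2⟩, rfl⟩
    refine ⟨fun m => ?_, ?_, ?_⟩
    · have := hX m; simp only [Pi.add_apply]; omega
    all_goals rw [hsum]; omega
  · rintro ⟨hx, h1, h2⟩
    refine ⟨x - fun _ => h, ⟨fun m => ?_, ?_⟩, sub_add_cancel _ _⟩
    · have := hx m; simp only [Pi.sub_apply]; omega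
    · have := hsum (x - fun _ => h); rw [sub_add_cancel] at this; omega

lemma sum_signedEulerianFun_mul_balN {b h : ℤ} (hb : b = 2 * h + 1) (hh : 0 ≤ h) {m n : ℕ}
    (hn : n = m + m) (k : ℤ) :
    ∑ j ∈ range (n + 1), signedEulerianFun n j * balN b n (j - m) k
      = b ^ n * signedEulerianFun n (k + m) := by
  have hwin (j : ℕ) : (balN b n (j - m) k : ℤ)
      = boxCount b n (b * (k + m) + h - j) - boxCount b n (b * (k + m - 1) + h - j) := by
    have hmb : (n : ℤ) * h + m = m * b := by subst hn hb; push_cast; ring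
    rw [balN_eq_card_box hb, card_filter_le_and_le_eq_sub _ _ (by omega),
      show k * b + h - (j - m) + n * h = b * (k + m) + h - j by linear_combination hmb,
      show k * b - h - (j - m) + n * h - 1 = b * (k + m - 1) + h - j by
        linear_combination hmb + hb]
    rfl
  simp only [hwin, mul_sub (signedEulerianFun n _), sum_sub_distrib,
    sum_signedEulerianFun_mul_boxCount (by omega : 0 ≤ b)]
  rw [bwdDiff_iter_causalOddPow_mul_add hb hh, bwdDiff_iter_causalOddPow_mul_add hb hh, ← mul_sub,
    signedEulerianFun, iterate_succ_apply']
  rfl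

lemma sum_Icc_neg_self {β : Type*} [AddCommMonoid β] (m : ℕ) (F : ℤ → β) :
    ∑ i ∈ Icc (-m : ℤ) m, F i = ∑ j ∈ range (m + m + 1), F (j - m) := by
  rw [Int.Icc_eq_finset_map, sum_map]
  simp only [Embedding.trans_apply, Nat.castEmbedding_apply, addLeftEmbedding_apply]
  rw [show ((m : ℤ) + 1 - -m).toNat = m + m + 1 by omega]
  simp only [neg_add_eq_sub]

lemma balPi_add_self (m : ℕ) (i : ℤ) :
    balPi (m + m) i = signedEulerian (m + m) (i + m).toNat / (2 ^ (m + m) * (m + m).factorial) := by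
  rw [balPi, show ((m + m : ℕ) : ℤ) / 2 = m by omega]

lemma sum_balPi_add_self (m : ℕ) : ∑ i ∈ Icc (-m : ℤ) m, balPi (m + m) i = 1 := by
  simp only [sum_Icc_neg_self, balPi_add_self, sub_add_cancel, Int.toNat_natCast, ← sum_div]
  rw [div_eq_one_iff_eq (by positivity)]
  exact_mod_cast sum_signedEulerian (m + m)

lemma sum_balPi_add_self_mul_balK {h : ℤ} (hh : 0 ≤ h) (m : ℕ) {k : ℤ} (hk : -m ≤ k) :
    ∑ i ∈ Icc (-m : ℤ) m, balPi (m + m) i * balK (2 * h + 1) (m + m) i k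
      = balPi (m + m) k := by
  have hK : signedEulerian (m + m) (k + m).toNat = signedEulerianFun (m + m) (k + m) := by
    rw [signedEulerian_eq_signedEulerianFun, Int.toNat_of_nonneg (by omega)]
  have key : ∑ j ∈ range (m + m + 1),
      (signedEulerianFun (m + m) j : ℚ) * balN (2 * h + 1) (m + m) (j - m) k
        = (2 * h + 1 : ℚ) ^ (m + m) * signedEulerianFun (m + m) (k + m) := by
    exact_mod_cast sum_signedEulerianFun_mul_balN rfl hh rfl k
  have hb : (2 * h + 1 : ℚ) ≠ 0 := by exact_mod_cast (by omega : 2 * h + 1 ≠ 0)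
  simp only [sum_Icc_neg_self, balPi_add_self, sub_add_cancel, Int.toNat_natCast, hK, balK,
    div_mul_div_comm, ← sum_div, signedEulerian_eq_signedEulerianFun, key]
  push_cast
  field_simp

theorem stmt3_general (b : ℤ) (hodd : Odd b) (hb : 3 ≤ b) (n : ℕ) (hneven : Even n) :
    (∑ i ∈ Finset.Icc (-(n : ℤ) / 2) ((n : ℤ) / 2), balPi n i = 1) ∧
    (∀ k : ℤ, -(n : ℤ) / 2 ≤ k → k ≤ (n : ℤ) / 2 →
      ∑ i ∈ Finset.Icc (-(n : ℤ) / 2) ((n : ℤ) / 2), balPi n i * balK b n i k = balPi n k) := by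
  obtain ⟨h, rfl⟩ := hodd
  obtain ⟨m, rfl⟩ := hneven
  rw [show ((m + m : ℕ) : ℤ) / 2 = m by omega, show -((m + m : ℕ) : ℤ) / 2 = -m by omega]
  exact ⟨sum_balPi_add_self m, fun k hk _ => sum_balPi_add_self_mul_balK (by omega) m hk⟩

theorem stmt3 (b : ℤ) (hodd : Odd b) (hb : 3 ≤ b) (n : ℕ) (hneven : Even n) (hn : 2 ≤ n) :
    (∑ i ∈ Finset.Icc (-(n : ℤ) / 2) ((n : ℤ) / 2), balPi n i = 1) ∧
    (∀ k : ℤ, -(n : ℤ) / 2 ≤ k → k ≤ (n : ℤ) / 2 →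
      ∑ i ∈ Finset.Icc (-(n : ℤ) / 2) ((n : ℤ) / 2), balPi n i * balK b n i k = balPi n k) :=
  stmt3_general b hodd hb n hneven
end

section
/- For integers n ≥ 2, define w^n_j[i] = Σ_{r=0}^{i} (-1)^r · C(n+1, r) · (2i-2r+1)^{n-j} for integers 0 ≤ j ≤ n and i ≥ 0. Then for all integers i, j with 1 ≤ i, j ≤ n, one has the recurrence w^n_j[i] = w^{n-1}_{j-1}[i] - w^{n-1}_{j-1}[i-1]. -/
/-- `w^n_j[i] = Σ_{r=0}^{i} (-1)^r C(n+1,r) (2i-2r+1)^{n-j}`. -/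
def wFoulkes (n j i : ℕ) : ℤ :=
  ∑ r ∈ Finset.range (i + 1),
    (-1 : ℤ) ^ r * (Nat.choose (n + 1) r : ℤ) * (2 * (i : ℤ) - 2 * r + 1) ^ (n - j)

/-- Pascal's rule `C(m+1, r+1) = C(m, r) + C(m, r+1)`, summed against alternating signs; the
`C(m, r)` part is reindexed, which shifts `f` by one. -/
theorem sum_range_neg_one_pow_mul_choose_succ {R : Type*} [CommRing R] (m i : ℕ) (f : ℕ → R) :
    ∑ r ∈ Finset.range (i + 2), (-1 : R) ^ r * (m + 1).choose r * f r =
      ∑ r ∈ Finset.range (i + 2), (-1 : R) ^ r * m.choose r * f r -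
        ∑ r ∈ Finset.range (i + 1), (-1 : R) ^ r * m.choose r * f (r + 1) := by
  rw [Finset.sum_range_succ' _ (i + 1), Finset.sum_range_succ' _ (i + 1), add_sub_right_comm,
    ← Finset.sum_sub_distrib, Nat.choose_zero_right, Nat.choose_zero_right]
  congr 1
  refine Finset.sum_congr rfl fun r _ => ?_
  rw [Nat.choose_succ_succ', Nat.cast_add]
  ring

theorem wFoulkes_succ_succ_succ (m k i : ℕ) :
    wFoulkes (m + 1) (k + 1) (i + 1) = wFoulkes m k (i + 1) - wFoulkes m k i := by
  unfold wFoulkes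
  rw [Nat.add_sub_add_right, sum_range_neg_one_pow_mul_choose_succ (m + 1) i
    fun r => (2 * ((i + 1 : ℕ) : ℤ) - 2 * r + 1) ^ (m - k)]
  congr 1
  refine Finset.sum_congr rfl fun r _ => ?_
  push_cast
  ring

theorem stmt4_general (n : ℕ) (i j : ℕ) (hi1 : 1 ≤ i)
    (hj1 : 1 ≤ j) (hj2 : j ≤ n) :
    wFoulkes n j i = wFoulkes (n - 1) (j - 1) i - wFoulkes (n - 1) (j - 1) (i - 1) := by
  obtain ⟨m, rfl⟩ : ∃ m, n = m + 1 := ⟨n - 1, by omega⟩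
  obtain ⟨k, rfl⟩ : ∃ k, j = k + 1 := ⟨j - 1, by omega⟩
  obtain ⟨l, rfl⟩ : ∃ l, i = l + 1 := ⟨i - 1, by omega⟩
  exact wFoulkes_succ_succ_succ m k l

theorem stmt4 (n : ℕ) (hn : 2 ≤ n) (i j : ℕ) (hi1 : 1 ≤ i) (hi2 : i ≤ n)
    (hj1 : 1 ≤ j) (hj2 : j ≤ n) :
    wFoulkes n j i = wFoulkes (n - 1) (j - 1) i - wFoulkes (n - 1) (j - 1) (i - 1) :=
  stmt4_general n i j hi1 hj1 hj2
end

section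
/- For every integer n ≥ 1 and every integer j with 0 ≤ j ≤ n, one has w^n_j[n] = (-1)^j, where w^n_j[i] = Σ_{r=0}^{i} (-1)^r · C(n+1, r) · (2i-2r+1)^{n-j}. -/
/-!
The `(n+1)`-st forward difference of a polynomial of degree at most `n` vanishes, i.e.
`∑_{r=0}^{n+1} (-1)^r C(n+1,r) P(r) = 0`. Applied to `P(r) = (2n - 2r + 1)^(n-j)`, this says that
`w^n_j[n]` is minus the missing term `r = n+1`, which is `(-1)^(n+1) (-1)^(n-j) = -(-1)^j`.
-/

open Finset Polynomial

theorem Polynomial.sum_range_neg_one_pow_mul_choose_mul_eval_eq_zero {R : Type*} [CommRing R]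
    (P : R[X]) {m : ℕ} (hP : P.natDegree < m) :
    ∑ k ∈ range (m + 1), (-1 : R) ^ k * m.choose k * P.eval (k : R) = 0 := by
  have hsum := congr_fun (fwdDiff_iter_eq_zero_of_degree_lt hP) 0
  rw [fwdDiff_iter_eq_sum_shift] at hsum
  have hsign : ∀ k ∈ range (m + 1),
      ((-1 : ℤ) ^ (m - k) * m.choose k) • P.eval (0 + k • (1 : R))
        = (-1 : R) ^ m * ((-1 : R) ^ k * m.choose k * P.eval (k : R)) := by
    intro k hk
    obtain ⟨l, rfl⟩ := Nat.exists_eq_add_of_le (Nat.lt_succ_iff.mp (mem_range.mp hk))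
    have hpow : (-1 : R) ^ (k + l) * (-1) ^ k = (-1) ^ l := by
      rw [pow_add, mul_right_comm, ← mul_pow, neg_one_mul, neg_neg, one_pow, one_mul]
    simp only [Nat.add_sub_cancel_left, zero_add, nsmul_eq_mul, mul_one, zsmul_eq_mul]
    push_cast
    linear_combination (-((k + l).choose k * P.eval (k : R))) * hpow
  rw [sum_congr rfl hsign, ← mul_sum, Pi.zero_apply] at hsum
  calc _ = (-1 : R) ^ m * (-1) ^ m *
        ∑ k ∈ range (m + 1), (-1 : R) ^ k * m.choose k * P.eval (k : R) := by
        rw [← pow_add, ← two_mul, pow_mul, neg_one_sq, one_pow, one_mul]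
    _ = 0 := by rw [mul_assoc, hsum, mul_zero]

theorem stmt5_general (n : ℕ) (j : ℕ) (hj : j ≤ n) :
    wFoulkes n j n = (-1 : ℤ) ^ j := by
  set P : ℤ[X] := (C (-2) * X + C (2 * (n : ℤ) + 1)) ^ (n - j)
  have hdeg : P.natDegree < n + 1 :=
    (natDegree_pow_le_of_le _ natDegree_linear_le).trans_lt (by omega)
  have hvanish := P.sum_range_neg_one_pow_mul_choose_mul_eval_eq_zero hdeg
  have hlast : (-1 : ℤ) ^ (n + 1) * (n + 1).choose (n + 1) * P.eval ((n + 1 : ℕ) : ℤ)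
      = -(-1) ^ j := by
    obtain ⟨k, rfl⟩ := Nat.exists_eq_add_of_le hj
    simp only [P, Nat.choose_self, eval_pow, eval_add, eval_mul, eval_C, eval_X,
      Nat.add_sub_cancel_left]
    push_cast
    rw [show -2 * ((j : ℤ) + k + 1) + (2 * (j + k) + 1) = -1 by ring, mul_one, ← pow_add,
      show j + k + 1 + k = j + 1 + 2 * k by ring, pow_add, pow_mul, neg_one_sq, one_pow,
      mul_one, pow_succ, mul_neg_one]
  rw [sum_range_succ, hlast] at hvanish
  have hw : wFoulkes n j n = ∑ r ∈ range (n + 1),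
      (-1 : ℤ) ^ r * (n + 1).choose r * P.eval (r : ℤ) := by
    simp only [wFoulkes, P, eval_pow, eval_add, eval_mul, eval_C, eval_X]
    ring_nf
  linarith

theorem stmt5 (n : ℕ) (hn : 1 ≤ n) (j : ℕ) (hj : j ≤ n) :
    wFoulkes n j n = (-1 : ℤ) ^ j :=
  stmt5_general n j hj
end

section
/- Let n ≥ 1 be an integer and let j be an integer with 0 ≤ j ≤ n. The n-dimensional Lebesgue measure of the set {u ∈ [0,1]^n : j - 1/2 ≤ u_1 + ⋯ + u_n ≤ j + 1/2} equals Ā(n,j)/(2^n · n!), where Ā(n,j) = Σ_{r=0}^{j} (-1)^r · C(n+1, r) · (2j-2r+1)^n. Equivalently, if U_1,…,U_n are independent uniform random variables on [0,1], then P(j - 1/2 ≤ U_1 + ⋯ + U_n ≤ j + 1/2) = Ā(n,j)/(2^n · n!). -/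
/-!
The volume `F n t` of `{u ∈ [0,1]^n | u₁ + ⋯ + uₙ ≤ t}` is the Irwin–Hall distribution function
`F n t = (1/n!) ∑ᵣ (-1)ʳ C(n,r) (t - r)₊ⁿ`. By Fubini, `F (n+1) t = ∫₀¹ F n (t - x) dx`, and
integrating the truncated powers term by term reproduces the formula thanks to Pascal's rule.
The hyperplane `∑ uₖ = j - 1/2` is Lebesgue-null, so the slab has volume
`F n (j + 1/2) - F n (j - 1/2)`; Pascal's rule once more turns this difference into
`∑ᵣ (-1)ʳ C(n+1,r) (j + 1/2 - r)ⁿ / n!`, in which only the terms `r ≤ j` survive.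
-/

open MeasureTheory Set

theorem sum_range_alternating_choose_succ_mul {R : Type*} [CommRing R] (n : ℕ) (A : ℕ → R) :
    ∑ r ∈ Finset.range (n + 2), (-1) ^ r * ((n + 1).choose r : R) * A r
      = ∑ r ∈ Finset.range (n + 1), (-1) ^ r * (n.choose r : R) * (A r - A (r + 1)) := by
  calc _ = ∑ r ∈ Finset.range (n + 2), ((n + 1).choose r : R) * ((-1) ^ r * A r) :=
        Finset.sum_congr rfl fun r _ => by ring
    _ = ∑ r ∈ Finset.range (n + 1), (n.choose r : R) * ((-1) ^ r * A r)
          + ∑ r ∈ Finset.range (n + 1), (n.choose r : R) * ((-1) ^ (r + 1) * A (r + 1)) :=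
        Finset.sum_choose_succ_mul (fun r _ => (-1) ^ r * A r) n
    _ = _ := by
        rw [← Finset.sum_add_distrib]
        exact Finset.sum_congr rfl fun r _ => by ring

theorem hasDerivAt_max_zero_pow_succ {n : ℕ} (hn : n ≠ 0) (y : ℝ) :
    HasDerivAt (fun y : ℝ => max y 0 ^ (n + 1)) ((n + 1) * max y 0 ^ n) y := by
  have left : ∀ y ≤ (0 : ℝ),
      HasDerivWithinAt (fun y : ℝ => max y 0 ^ (n + 1)) ((n + 1) * max y 0 ^ n) (Iic 0) y := by
    intro y hy
    refine ((hasDerivWithinAt_const y _ 0).congr (fun x hx => ?_) ?_).congr_deriv ?_ <;>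
      simp_all [zero_pow hn]
  have right : ∀ y ≥ (0 : ℝ),
      HasDerivWithinAt (fun y : ℝ => max y 0 ^ (n + 1)) ((n + 1) * max y 0 ^ n) (Ici 0) y := by
    intro y hy
    refine ((hasDerivAt_pow (n + 1) y).hasDerivWithinAt.congr (fun x hx => ?_) ?_).congr_deriv
      ?_ <;> simp_all
  rcases lt_trichotomy y 0 with hy | rfl | hy
  · exact (left y hy.le).hasDerivAt (Iic_mem_nhds hy)
  · simpa [Iic_union_Ici] using (left 0 le_rfl).union (right 0 le_rfl)
  · exact (right y hy.le).hasDerivAt (Ici_mem_nhds hy)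

theorem integral_max_sub_zero_pow {n : ℕ} (hn : n ≠ 0) (a : ℝ) :
    ∫ x in (0 : ℝ)..1, max (a - x) 0 ^ n
      = (max a 0 ^ (n + 1) - max (a - 1) 0 ^ (n + 1)) / (n + 1) := by
  have antideriv : ∀ x ∈ uIcc (0 : ℝ) 1,
      HasDerivAt (fun x : ℝ => -max (a - x) 0 ^ (n + 1) / (n + 1)) (max (a - x) 0 ^ n) x := by
    intro x _
    have := ((hasDerivAt_max_zero_pow_succ hn (a - x)).comp x
      ((hasDerivAt_id x).const_sub a)).neg.div_const ((n : ℝ) + 1)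
    refine this.congr_deriv ?_
    field_simp
  rw [intervalIntegral.integral_eq_sub_of_hasDerivAt antideriv
    ((by fun_prop : Continuous fun x : ℝ => max (a - x) 0 ^ n).intervalIntegrable 0 1)]
  ring_nf

theorem MeasureTheory.Measure.addHaar_preimage_singleton_linearMap {E : Type*}
    [NormedAddCommGroup E] [NormedSpace ℝ E] [MeasurableSpace E] [BorelSpace E]
    [FiniteDimensional ℝ E] (μ : Measure E) [μ.IsAddHaarMeasure] {L : E →ₗ[ℝ] ℝ} {v : E} (hv : L v ≠ 0) (a : ℝ) :
    μ (L ⁻¹' {a}) = 0 := by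
  have htranslate : L ⁻¹' {a} = (fun u => -((a / L v) • v) + u) ⁻¹' LinearMap.ker L := by
    ext u
    simpa [hv, neg_add_eq_zero] using eq_comm
  rw [htranslate, measure_preimage_add]
  exact Measure.addHaar_submodule μ _ fun h => hv (LinearMap.mem_ker.1 (h ▸ Submodule.mem_top))

noncomputable def irwinHallCDF (n : ℕ) (t : ℝ) : ℝ :=
  (∑ r ∈ Finset.range (n + 1), (-1) ^ r * (n.choose r : ℝ) * max (t - r) 0 ^ n) / n.factorial

theorem continuous_irwinHallCDF (n : ℕ) : Continuous (irwinHallCDF n) := by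
  unfold irwinHallCDF
  fun_prop

theorem irwinHallCDF_one (t : ℝ) : irwinHallCDF 1 t = max t 0 - max (t - 1) 0 := by
  simp [irwinHallCDF, Finset.sum_range_succ, sub_eq_add_neg]

theorem integral_irwinHallCDF_sub {n : ℕ} (hn : n ≠ 0) (t : ℝ) :
    ∫ x in (0 : ℝ)..1, irwinHallCDF n (t - x) = irwinHallCDF (n + 1) t := by
  have hint : ∀ r ∈ Finset.range (n + 1), IntervalIntegrable
      (fun x : ℝ => (-1) ^ r * (n.choose r : ℝ) * max (t - r - x) 0 ^ n) volume 0 1 :=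
    fun r _ => (by fun_prop : Continuous _).intervalIntegrable 0 1
  simp only [irwinHallCDF, sub_right_comm t _ (_ : ℕ)]
  rw [intervalIntegral.integral_div, intervalIntegral.integral_finsetSum hint,
    sum_range_alternating_choose_succ_mul, Nat.factorial_succ]
  simp only [intervalIntegral.integral_const_mul, integral_max_sub_zero_pow hn]
  push_cast
  simp only [← sub_sub, Finset.sum_div, mul_div_assoc, div_div]

theorem irwinHallCDF_nonneg {n : ℕ} (hn : 1 ≤ n) (t : ℝ) : 0 ≤ irwinHallCDF n t := by
  induction n, hn using Nat.le_induction generalizing t with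
  | base =>
    rw [irwinHallCDF_one, sub_nonneg]
    exact max_le_max (by linarith) le_rfl
  | succ n hn ih =>
    rw [← integral_irwinHallCDF_sub (by omega)]
    exact intervalIntegral.integral_nonneg zero_le_one fun x _ => ih _

theorem irwinHallCDF_sub_irwinHallCDF_sub_one (n : ℕ) (t : ℝ) :
    irwinHallCDF n t - irwinHallCDF n (t - 1)
      = (∑ r ∈ Finset.range (n + 2), (-1) ^ r * ((n + 1).choose r : ℝ) * max (t - r) 0 ^ n)
          / n.factorial := by
  rw [sum_range_alternating_choose_succ_mul, irwinHallCDF, irwinHallCDF, ← sub_div,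
    ← Finset.sum_sub_distrib]
  push_cast
  simp only [mul_sub, sub_sub, add_comm (1 : ℝ)]

theorem irwinHallCDF_add_half_sub_irwinHallCDF_sub_half {n j : ℕ} (hn : n ≠ 0)
    (hj : j ≤ n + 1) :
    irwinHallCDF n (j + 1 / 2) - irwinHallCDF n (j - 1 / 2)
      = signedEulerian n j / (2 ^ n * n.factorial) := by
  have hvanish : ∀ r ∈ Finset.range (n + 2), r ∉ Finset.range (j + 1) →
      (-1) ^ r * ((n + 1).choose r : ℝ) * max ((j : ℝ) + 1 / 2 - r) 0 ^ n = 0 := by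
    intro r _ hr
    have : (j : ℝ) + 1 ≤ r := by exact_mod_cast (by simpa using hr : j < r)
    rw [max_eq_right (by linarith), zero_pow hn, mul_zero]
  rw [show (j : ℝ) - 1 / 2 = j + 1 / 2 - 1 by ring, irwinHallCDF_sub_irwinHallCDF_sub_one,
    ← Finset.sum_subset (Finset.range_subset_range.2 (by omega)) hvanish, ← div_div,
    signedEulerian]
  push_cast
  congr 1
  rw [Finset.sum_div]
  refine Finset.sum_congr rfl fun r hr => ?_
  have : (r : ℝ) ≤ j := by exact_mod_cast Finset.mem_range_succ_iff.1 hr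
  rw [max_eq_left (by linarith), mul_div_assoc, ← div_pow]
  ring_nf

def unitCubeSumLE (n : ℕ) (t : ℝ) : Set (Fin n → ℝ) :=
  {u | (∀ k, u k ∈ Icc (0 : ℝ) 1) ∧ ∑ k, u k ≤ t}

theorem measurableSet_unitCubeSumLE (n : ℕ) (t : ℝ) : MeasurableSet (unitCubeSumLE n t) := by
  unfold unitCubeSumLE
  measurability

theorem volume_unitCubeSumLE_one (t : ℝ) :
    volume (unitCubeSumLE 1 t) = ENNReal.ofReal (irwinHallCDF 1 t) := by
  have hS : unitCubeSumLE 1 t = MeasurableEquiv.funUnique (Fin 1) ℝ ⁻¹' Icc 0 (min 1 t) := by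
    ext u
    simp [unitCubeSumLE, Fin.forall_fin_one, and_assoc]
  rw [hS]
  refine ((volume_preserving_funUnique (Fin 1) ℝ).measure_preimage_equiv _).trans ?_
  rw [Real.volume_Icc, irwinHallCDF_one]
  rcases le_total t 0 with ht | ht
  · simp [ht, ENNReal.ofReal_eq_zero.2, (by linarith : t - 1 ≤ 0)]
  rcases le_total t 1 with ht' | ht'
  · simp [ht, ht', (by linarith : t - 1 ≤ 0)]
  · simp [ht, ht', (by linarith : 0 ≤ t - 1)]

theorem volume_unitCubeSumLE_succ (n : ℕ) (t : ℝ) :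
    volume (unitCubeSumLE (n + 1) t) = ∫⁻ x in Icc 0 1, volume (unitCubeSumLE n (t - x)) := by
  let e := MeasurableEquiv.piFinSuccAbove (fun _ : Fin (n + 1) => ℝ) 0
  have hpre : e.symm ⁻¹' unitCubeSumLE (n + 1) t
      = {p : ℝ × (Fin n → ℝ) | p.1 ∈ Icc 0 1 ∧ p.2 ∈ unitCubeSumLE n (t - p.1)} := by
    ext ⟨x, y⟩
    simp [e, unitCubeSumLE, Fin.forall_fin_succ, Fin.sum_univ_succ, and_assoc,
      le_sub_iff_add_le']
  have hmeas : MeasurableSet (e.symm ⁻¹' unitCubeSumLE (n + 1) t) :=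
    e.symm.measurable (measurableSet_unitCubeSumLE _ _)
  rw [← ((volume_preserving_piFinSuccAbove _ 0).symm _).measure_preimage_equiv,
    Measure.volume_eq_prod, Measure.prod_apply hmeas, ← lintegral_indicator measurableSet_Icc]
  congr with x
  by_cases hx : x ∈ Icc (0 : ℝ) 1 <;> simp [hpre, hx, -mem_Icc]

theorem volume_unitCubeSumLE {n : ℕ} (hn : 1 ≤ n) (t : ℝ) :
    volume (unitCubeSumLE n t) = ENNReal.ofReal (irwinHallCDF n t) := by
  induction n, hn using Nat.le_induction generalizing t with
  | base => exact volume_unitCubeSumLE_one t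
  | succ n hn ih =>
    have hcont : Continuous fun x => irwinHallCDF n (t - x) :=
      (continuous_irwinHallCDF n).comp (continuous_sub_left t)
    simp only [volume_unitCubeSumLE_succ, ih]
    rw [← ofReal_integral_eq_lintegral_ofReal hcont.integrableOn_Icc
        (ae_of_all _ fun x => irwinHallCDF_nonneg hn _),
      integral_Icc_eq_integral_Ioc, ← intervalIntegral.integral_of_le zero_le_one,
      integral_irwinHallCDF_sub (by omega)]

theorem volume_unitCube_sum_mem_Icc {n : ℕ} (hn : 1 ≤ n) {a b : ℝ} (hab : a ≤ b) :
    volume {u : Fin n → ℝ | (∀ k, u k ∈ Icc (0 : ℝ) 1) ∧ a ≤ ∑ k, u k ∧ ∑ k, u k ≤ b}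
      = ENNReal.ofReal (irwinHallCDF n b - irwinHallCDF n a) := by
  have hnull : volume {u : Fin n → ℝ | ∑ k, u k = a} = 0 := by
    convert Measure.addHaar_preimage_singleton_linearMap volume
      (L := ∑ k : Fin n, LinearMap.proj (R := ℝ) (φ := fun _ => ℝ) k)
      (v := Pi.single (⟨0, hn⟩ : Fin n) 1) (by simp) a using 2
    ext u
    simp
  have hae : {u : Fin n → ℝ | (∀ k, u k ∈ Icc (0 : ℝ) 1) ∧ a ≤ ∑ k, u k ∧ ∑ k, u k ≤ b}
      =ᵐ[volume] (unitCubeSumLE n b \ unitCubeSumLE n a : Set (Fin n → ℝ)) := by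
    refine ae_eq_set.2 ⟨measure_mono_null ?_ hnull, measure_mono_null ?_ hnull⟩
    · rintro u ⟨⟨hcube, hau, hub⟩, hnot⟩
      exact le_antisymm (not_not.1 fun h => hnot ⟨⟨hcube, hub⟩, fun ha => h ha.2⟩) hau
    · rintro u ⟨⟨⟨hcube, hub⟩, hnot⟩, hslab⟩
      exact absurd ⟨hcube, (not_le.1 fun h => hnot ⟨hcube, h⟩).le, hub⟩ hslab
  have hsub : unitCubeSumLE n a ⊆ unitCubeSumLE n b := fun u ⟨hcube, hu⟩ => ⟨hcube, hu.trans hab⟩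
  rw [measure_congr hae, measure_sdiff hsub (measurableSet_unitCubeSumLE n a).nullMeasurableSet
      (by simp [volume_unitCubeSumLE hn]),
    volume_unitCubeSumLE hn, volume_unitCubeSumLE hn,
    ENNReal.ofReal_sub _ (irwinHallCDF_nonneg hn a)]

theorem stmt7 (n : ℕ) (hn : 1 ≤ n) (j : ℕ) (hj : j ≤ n) :
    MeasureTheory.volume
        {u : Fin n → ℝ | (∀ k, u k ∈ Set.Icc (0 : ℝ) 1) ∧
          (j : ℝ) - 1 / 2 ≤ ∑ k, u k ∧ ∑ k, u k ≤ (j : ℝ) + 1 / 2}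
      = ENNReal.ofReal ((signedEulerian n j : ℝ) / (2 ^ n * Nat.factorial n)) := by
  rw [volume_unitCube_sum_mem_Icc hn (by linarith),
    irwinHallCDF_add_half_sub_irwinHallCDF_sub_half (by omega) (by omega)]
end

section
/- Fix an odd integer b ≥ 3 and an even integer n ≥ 2. For every integer j with 0 ≤ j ≤ n, the vector u_j, defined at each state i with -n/2 ≤ i ≤ n/2 by letting u_j[i] be the coefficient of x^{n-j} in the polynomial (x-n-2i+1)(x-n-2i+3)⋯(x-n-2i+2n-1) (that is, in Π_{m=1}^{n} (x - n - 2i + 2m - 1)), is a right eigenvector of the balanced carries transition matrix K with eigenvalue b^{-j}; that is, for every integer i with -n/2 ≤ i ≤ n/2, Σ_{k=-n/2}^{n/2} K(i,k) · u_j[k] = b^{-j} · u_j[i]. -/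
/-- The right eigenvector `u_j` of the balanced carries chain, evaluated at state `i`:
the coefficient of `x^{n-j}` in `(x-n-2i+1)(x-n-2i+3)⋯(x-n-2i+2n-1)`. -/
noncomputable def rightEig (n : ℕ) (j : ℕ) (i : ℤ) : ℤ :=
  ((∏ m ∈ Finset.Icc 1 n,
      ((Polynomial.X : Polynomial ℤ) -
        Polynomial.C ((n : ℤ) + 2 * i - 2 * (m : ℤ) + 1))).coeff (n - j))

open Finset Polynomial

lemma descPochhammer_eval_add_one_sub (n : ℕ) (z : ℤ) :
    (descPochhammer ℤ (n + 1)).eval (z + 1) - (descPochhammer ℤ (n + 1)).eval z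
      = (n + 1) * (descPochhammer ℤ n).eval z := by
  rw [descPochhammer_succ_eval n z, descPochhammer_succ_left]
  simp only [eval_mul, eval_X, eval_comp, eval_sub, eval_one, add_sub_cancel_right]
  ring

lemma descPochhammer_eval_ediv_add_one_sub {b : ℤ} (hb : 0 < b) (n : ℕ) (A : ℤ) :
    (descPochhammer ℤ (n + 1)).eval ((A + 1) / b) - (descPochhammer ℤ (n + 1)).eval (A / b)
      = if b ∣ A + 1 then (n + 1) * (descPochhammer ℤ n).eval (A / b) else 0 := by
  obtain ⟨h₁, h₂⟩ := (Int.ediv_eq_iff_of_pos (x := A) hb).1 rfl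
  split_ifs with hdvd
  · obtain ⟨q, hq⟩ := hdvd
    have hA : A / b = q - 1 := (Int.ediv_eq_iff_of_pos hb).2 ⟨by linarith, by linarith⟩
    rw [hq, Int.mul_ediv_cancel_left _ hb.ne', hA, ← descPochhammer_eval_add_one_sub,
      sub_add_cancel]
  · have hne : A + 1 ≠ A / b * b + b := fun h ↦ hdvd ⟨A / b + 1, by rw [h]; ring⟩
    rw [(Int.ediv_eq_iff_of_pos hb).2 ⟨by linarith, lt_of_le_of_ne (by linarith) hne⟩, sub_self]

lemma sum_Icc_ite_dvd_add_one {M : Type*} [AddCommMonoid M] {b : ℤ} (hb : 0 < b) (a A : ℤ)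
    (g : ℤ → M) :
    ∑ d ∈ Icc a (a + b - 1), (if b ∣ A + d + 1 then g ((A + d) / b) else 0)
      = g ((A + a) / b) := by
  set q := (A + a) / b
  obtain ⟨hq₁, hq₂⟩ := (Int.ediv_eq_iff_of_pos (x := A + a) hb).1 rfl
  set d₀ := q * b + b - 1 - A with hd₀
  have hdvd : ∀ d ∈ Icc a (a + b - 1), b ∣ A + d + 1 ↔ d = d₀ := by
    intro d hd
    rw [mem_Icc] at hd
    constructor
    · intro h
      have h' : b ∣ d - d₀ := by
        rw [show d - d₀ = A + d + 1 - (q + 1) * b by rw [hd₀]; ring]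
        exact dvd_sub h (dvd_mul_left b _)
      exact sub_eq_zero.1 (Int.eq_zero_of_abs_lt_dvd h' (abs_lt.2 ⟨by linarith, by linarith⟩))
    · rintro rfl
      exact ⟨q + 1, by rw [hd₀]; ring⟩
  rw [sum_congr rfl fun d hd ↦ if_congr (hdvd d hd) rfl rfl, sum_ite_eq',
    if_pos (mem_Icc.2 ⟨by linarith, by linarith⟩)]
  congr 1
  exact (Int.ediv_eq_iff_of_pos hb).2 ⟨by linarith, by linarith⟩

lemma sum_piFinset_succ {α M : Type*} [AddCommMonoid M] (s : Finset α) (n : ℕ)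
    (f : (Fin (n + 1) → α) → M) :
    ∑ X ∈ Fintype.piFinset (fun _ ↦ s), f X
      = ∑ d ∈ s, ∑ Y ∈ Fintype.piFinset (fun _ : Fin n ↦ s), f (Fin.cons d Y) := by
  have h := filter_piFinset_eq_map_consEquiv (fun _ : Fin (n + 1) ↦ s) fun _ ↦ True
  simp only [filter_true] at h
  rw [h, sum_map, sum_product]
  rfl

lemma sum_mem_Icc_of_mem_piFinset {n : ℕ} {lo hi : ℤ} {X : Fin n → ℤ}
    (hX : X ∈ Fintype.piFinset fun _ ↦ Icc lo hi) :
    n * lo ≤ ∑ k, X k ∧ ∑ k, X k ≤ n * hi := by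
  rw [Fintype.mem_piFinset] at hX
  constructor
  · simpa using card_nsmul_le_sum univ X lo fun k _ ↦ (mem_Icc.1 (hX k)).1
  · simpa using sum_le_card_nsmul univ X hi fun k _ ↦ (mem_Icc.1 (hX k)).2

noncomputable def digitBox (a b : ℤ) (n : ℕ) : Finset (Fin n → ℤ) :=
  Fintype.piFinset fun _ ↦ Icc a (a + b - 1)

section DigitSums

variable {b : ℤ}

lemma sum_digitBox_descPochhammer_add_one_sub (hb : 0 < b) (a : ℤ) (n : ℕ) (M : ℤ) :
    ∑ X ∈ digitBox a b (n + 1), (descPochhammer ℤ (n + 1)).eval ((M + 1 + ∑ k, X k) / b)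
      - ∑ X ∈ digitBox a b (n + 1), (descPochhammer ℤ (n + 1)).eval ((M + ∑ k, X k) / b)
      = (n + 1) * ∑ Y ∈ digitBox a b n, (descPochhammer ℤ n).eval ((M + a + ∑ k, Y k) / b) := by
  rw [← sum_sub_distrib, digitBox, sum_piFinset_succ, sum_comm, mul_sum]
  refine sum_congr rfl fun Y _ ↦ ?_
  rw [add_right_comm M a]
  refine Eq.trans ?_ (sum_Icc_ite_dvd_add_one hb a (M + ∑ k, Y k)
    fun q ↦ (n + 1 : ℤ) * (descPochhammer ℤ n).eval q)
  refine sum_congr rfl fun d _ ↦ ?_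
  rw [Fin.sum_cons, show M + 1 + (d + ∑ k, Y k) = M + ∑ k, Y k + d + 1 by ring,
    show M + (d + ∑ k, Y k) = M + ∑ k, Y k + d by ring, descPochhammer_eval_ediv_add_one_sub hb]

lemma sum_digitBox_descPochhammer_eq_zero (hb : 0 < b) (a : ℤ) (n : ℕ) :
    ∑ X ∈ digitBox a b (n + 1),
      (descPochhammer ℤ (n + 1)).eval ((-((n + 1 : ℕ) * a) + ∑ k, X k) / b) = 0 := by
  refine sum_eq_zero fun X hX ↦ ?_
  obtain ⟨hS₁, hS₂⟩ := sum_mem_Icc_of_mem_piFinset hX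
  have h₀ : 0 ≤ (-((n + 1 : ℕ) * a) + ∑ k, X k) / b := Int.ediv_nonneg (by linarith) hb.le
  have h₁ : (-((n + 1 : ℕ) * a) + ∑ k, X k) / b < (n + 1 : ℕ) :=
    (Int.ediv_lt_iff_lt_mul hb).2 (by push_cast at hS₂ ⊢; linarith)
  obtain ⟨q, hq⟩ := Int.eq_ofNat_of_zero_le h₀
  rw [hq] at h₁ ⊢
  exact descPochhammer_eval_coe_nat_of_lt (by omega)

theorem sum_digitBox_descPochhammer_ediv (hb : 0 < b) (a : ℤ) (n : ℕ) (M : ℤ) :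
    ∑ X ∈ digitBox a b n, (descPochhammer ℤ n).eval ((M + ∑ k, X k) / b)
      = (descPochhammer ℤ n).eval (M + n * a) := by
  induction n generalizing M with
  | zero => simp [digitBox]
  | succ n ih =>
    let F : ℤ → ℤ := fun M ↦
      ∑ X ∈ digitBox a b (n + 1), (descPochhammer ℤ (n + 1)).eval ((M + ∑ k, X k) / b)
        - (descPochhammer ℤ (n + 1)).eval (M + (n + 1 : ℕ) * a)
    have hstep : ∀ M, F (M + 1) = F M := by
      intro M
      have h₁ := sum_digitBox_descPochhammer_add_one_sub hb a n M
      have h₂ := descPochhammer_eval_add_one_sub n (M + (n + 1 : ℕ) * a)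
      rw [ih, show M + a + n * a = M + (n + 1 : ℕ) * a by push_cast; ring] at h₁
      rw [add_right_comm] at h₂
      simp only [F]
      linarith
    have hbase : F (-((n + 1 : ℕ) * a)) = 0 := by
      simp only [F, sum_digitBox_descPochhammer_eq_zero hb, neg_add_cancel,
        descPochhammer_ne_zero_eval_zero _ n.succ_ne_zero, sub_zero]
    have hF : F M = 0 := by
      induction M using Int.inductionOn' with
      | b => exact -((n + 1 : ℕ) * a)
      | zero => exact hbase
      | succ k _ hk => rw [hstep, hk]
      | pred k _ hk => rw [← hstep, sub_add_cancel, hk]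
    exact sub_eq_zero.1 hF

end DigitSums

noncomputable def carriesPoly (n : ℕ) (a : ℤ) : ℤ[X] :=
  ∏ m ∈ Icc 1 n, (X - C ((n : ℤ) + 2 * a - 2 * (m : ℤ) + 1))

lemma rightEig_eq_coeff_carriesPoly (n j : ℕ) (a : ℤ) :
    rightEig n j a = (carriesPoly n a).coeff (n - j) := rfl

lemma carriesPoly_eval (n : ℕ) (a y : ℤ) :
    (carriesPoly n a).eval (n - 1 - 2 * y) = (-2) ^ n * (descPochhammer ℤ n).eval (y + a) := by
  have hfactor : ∀ k ∈ range n,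
      eval (n - 1 - 2 * y) (X - C ((n : ℤ) + 2 * a - 2 * ((1 + k : ℕ) : ℤ) + 1))
        = -2 * (y + a - k) := by
    intro k _
    simp only [eval_sub, eval_X, eval_C]
    push_cast
    ring
  rw [carriesPoly, eval_prod, ← Ico_add_one_right_eq_Icc, prod_Ico_eq_prod_range,
    add_tsub_cancel_right, prod_congr rfl hfactor, prod_mul_distrib, prod_const, card_range,
    descPochhammer_eval_eq_prod_range]

theorem sum_digitBox_carriesPoly_ediv {c : ℤ} (hc : 0 ≤ c) (n : ℕ) (i : ℤ) :
    ∑ X ∈ digitBox (-c) (2 * c + 1) n, carriesPoly n ((i + ∑ k, X k + c) / (2 * c + 1))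
      = (carriesPoly n i).comp (C (2 * c + 1) * X) := by
  have hb : 0 < 2 * c + 1 := by omega
  refine eq_of_infinite_eval_eq _ _ <| Set.infinite_of_injective_forall_mem
    (f := fun y : ℤ ↦ n - 1 - 2 * y) (fun y₁ y₂ h ↦ by simp only at h; omega) fun y ↦ ?_
  have hshift : ∀ S : ℤ, y + (i + S + c) / (2 * c + 1)
      = ((2 * c + 1) * y + i + c + S) / (2 * c + 1) := fun S ↦ by
    rw [show (2 * c + 1) * y + i + c + S = i + S + c + (2 * c + 1) * y by ring,
      Int.add_mul_ediv_left _ _ hb.ne', add_comm]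
  simp only [Set.mem_ofPred_eq, eval_finsetSum, carriesPoly_eval, eval_comp, eval_mul, eval_C,
    eval_X]
  rw [← mul_sum, sum_congr rfl fun X _ ↦ by rw [hshift], sum_digitBox_descPochhammer_ediv hb,
    show (2 * c + 1) * (n - 1 - 2 * y) = n - 1 - 2 * ((2 * c + 1) * y - c * (n - 1)) by ring,
    carriesPoly_eval]
  ring_nf

lemma digitBox_balanced (c : ℤ) (n : ℕ) :
    digitBox (-c) (2 * c + 1) n = Fintype.piFinset fun _ ↦ Icc (-c) c := by
  rw [digitBox, show -c + (2 * c + 1) - 1 = c by ring]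

lemma sum_balN_mul {c : ℤ} (hc : 0 ≤ c) {n : ℕ} (hn : Even n) {i : ℤ}
    (hi₁ : -(n : ℤ) / 2 ≤ i) (hi₂ : i ≤ (n : ℤ) / 2) (f : ℤ → ℤ) :
    ∑ k ∈ Icc (-(n : ℤ) / 2) ((n : ℤ) / 2), (balN (2 * c + 1) n i k : ℤ) * f k
      = ∑ X ∈ digitBox (-c) (2 * c + 1) n, f ((i + ∑ k, X k + c) / (2 * c + 1)) := by
  have hb : 0 < 2 * c + 1 := by omega
  have hc' : (2 * c + 1 - 1) / 2 = c := by omega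
  simp only [balN, hc', ← digitBox_balanced, natCast_card_filter, sum_mul, boole_mul]
  rw [sum_comm]
  refine sum_congr rfl fun X hX ↦ ?_
  obtain ⟨hS₁, hS₂⟩ := sum_mem_Icc_of_mem_piFinset ((digitBox_balanced c n).le hX)
  have hround : ∀ k : ℤ, (k * (2 * c + 1) - c ≤ i + ∑ k, X k ∧ i + ∑ k, X k ≤ k * (2 * c + 1) + c)
      ↔ (i + ∑ k, X k + c) / (2 * c + 1) = k := fun k ↦ by
    rw [Int.ediv_eq_iff_of_pos hb]
    constructor <;> rintro ⟨h₁, h₂⟩ <;> constructor <;> linarith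
  simp only [hround, sum_ite_eq]
  obtain ⟨m, rfl⟩ := hn
  have hm : ((m + m : ℕ) : ℤ) / 2 = m := by omega
  have hm' : -((m + m : ℕ) : ℤ) / 2 = -m := by omega
  rw [hm'] at hi₁
  rw [hm] at hi₂
  rw [hm', hm]
  push_cast at hS₁ hS₂
  rw [if_pos (mem_Icc.2 ⟨(Int.le_ediv_iff_mul_le hb).2 (by linarith),
    Int.lt_add_one_iff.1 ((Int.ediv_lt_iff_lt_mul hb).2 (by linarith))⟩)]

theorem stmt8_general (b : ℤ) (hodd : Odd b) (hb : 3 ≤ b) (n : ℕ) (hneven : Even n)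
    (j : ℕ) (hj : j ≤ n)
    (i : ℤ) (hi1 : -(n : ℤ) / 2 ≤ i) (hi2 : i ≤ (n : ℤ) / 2) :
    ∑ k ∈ Finset.Icc (-(n : ℤ) / 2) ((n : ℤ) / 2),
        balK b n i k * (rightEig n j k : ℚ)
      = (1 / (b : ℚ) ^ j) * (rightEig n j i : ℚ) := by
  obtain ⟨c, rfl⟩ := hodd
  have hc : 0 ≤ c := by omega
  have hsum : ∑ k ∈ Icc (-(n : ℤ) / 2) ((n : ℤ) / 2), (balN (2 * c + 1) n i k : ℤ) * rightEig n j k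
      = (2 * c + 1) ^ (n - j) * rightEig n j i := by
    rw [sum_balN_mul hc hneven hi1 hi2]
    have h := congrArg (coeff · (n - j)) (sum_digitBox_carriesPoly_ediv hc n i)
    simp only [finsetSum_coeff, comp_C_mul_X_coeff] at h
    simp only [rightEig_eq_coeff_carriesPoly]
    rw [h, mul_comm]
  have hb₀ : (2 * c + 1 : ℚ) ≠ 0 := by norm_cast; omega
  have hsumℚ := congrArg (Int.cast : ℤ → ℚ) hsum
  push_cast at hsumℚ
  simp only [balK, div_mul_eq_mul_div, ← sum_div]
  push_cast
  rw [hsumℚ, pow_sub₀ _ hb₀ hj]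
  field_simp

theorem stmt8 (b : ℤ) (hodd : Odd b) (hb : 3 ≤ b) (n : ℕ) (hneven : Even n) (hn : 2 ≤ n)
    (j : ℕ) (hj : j ≤ n)
    (i : ℤ) (hi1 : -(n : ℤ) / 2 ≤ i) (hi2 : i ≤ (n : ℤ) / 2) :
    ∑ k ∈ Finset.Icc (-(n : ℤ) / 2) ((n : ℤ) / 2),
        balK b n i k * (rightEig n j k : ℚ)
      = (1 / (b : ℚ) ^ j) * (rightEig n j i : ℚ) :=
  stmt8_general b hodd hb n hneven j hj i hi1 hi2
end

section
/- Let n ≥ 1 be an integer and let i, j be integers with |j - i| ≤ n. Then Σ_{r=0}^{n+1} (-1)^r · C(n+1, r) · C(n + j - i - r, n) = 1 if i = j, and equals 0 otherwise, where C(m, n) denotes the binomial coefficient, taken to be 0 whenever m < n. -/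
/-!
For `d = j - i ≥ 1` every argument `n + d - r` is a natural number, and the sum is, up to sign and
reversal, the `(n + 1)`-st forward difference of the degree-`n` polynomial `x ↦ C(x, n)`, hence
zero. For `d ≤ 0` the truncation kills every term except possibly `r = 0`, which is
`C(n + d, n) = [d = 0]`.
-/

open Finset

lemma intChoose_eq_zero_of_lt {m k : ℤ} (hk : 0 ≤ k) (h : m < k) : intChoose m k = 0 := by
  unfold intChoose
  split_ifs
  · rw [Nat.choose_eq_zero_of_lt (by omega), Nat.cast_zero]
  · rfl

@[simp]
lemma intChoose_natCast_s10 (a b : ℕ) : intChoose a b = a.choose b := by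
  simp [intChoose]

lemma fwdDiff_iter_choose_eq_zero_of_lt {n k : ℕ} (h : n < k) :
    (fwdDiff 1)^[k] (fun x ↦ x.choose n : ℕ → ℤ) = 0 := by
  obtain ⟨e, rfl⟩ := Nat.exists_eq_add_of_lt h
  have hconst : (fwdDiff 1)^[n] (fun x ↦ x.choose n : ℕ → ℤ) = fun _ ↦ 1 := by
    simpa using fwdDiff_iter_choose 0 n
  rw [show n + e + 1 = e + 1 + n by ring, Function.iterate_add_apply, hconst,
    Function.iterate_succ_apply, fwdDiff_const]
  exact Function.iterate_fixed (fwdDiff_const 1 0) e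

lemma sum_range_alternating_choose_mul_choose_eq_zero {n k : ℕ} (h : n < k) (m : ℕ) :
    ∑ r ∈ range (k + 1), (-1 : ℤ) ^ r * k.choose r * (m + k - r).choose n = 0 := by
  have hdiff := fwdDiff_iter_eq_sum_shift 1 (fun x ↦ x.choose n : ℕ → ℤ) k m
  rw [fwdDiff_iter_choose_eq_zero_of_lt h, Pi.zero_apply, ← sum_range_reflect] at hdiff
  rw [hdiff]
  refine sum_congr rfl fun r hr ↦ ?_
  rw [mem_range] at hr
  rw [smul_eq_mul, smul_eq_mul, mul_one, show k + 1 - 1 - r = k - r by omega,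
    Nat.choose_symm (by omega), Nat.sub_sub_self (by omega), ← Nat.add_sub_assoc (by omega)]

lemma sum_range_alternating_choose_mul_intChoose (n : ℕ) (d : ℤ) :
    ∑ r ∈ range (n + 2), (-1 : ℤ) ^ r * (n + 1).choose r * intChoose (n + d - r) n
      = if d = 0 then 1 else 0 := by
  rcases lt_trichotomy d 0 with hd | rfl | hd
  · rw [if_neg hd.ne]
    exact sum_eq_zero fun r _ ↦ by rw [intChoose_eq_zero_of_lt (by positivity) (by omega), mul_zero]
  · rw [if_pos rfl, sum_eq_single_of_mem 0 (by simp)]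
    · simp
    · intro r _ hr
      rw [intChoose_eq_zero_of_lt (by positivity) (by omega), mul_zero]
  · obtain ⟨m, rfl⟩ : ∃ m : ℕ, d = m + 1 := ⟨d.toNat - 1, by omega⟩
    rw [if_neg (by omega), ← sum_range_alternating_choose_mul_choose_eq_zero n.lt_succ_self m]
    refine sum_congr rfl fun r hr ↦ ?_
    rw [mem_range] at hr
    rw [show (n : ℤ) + (m + 1) - r = ((m + (n + 1) - r : ℕ) : ℤ) by omega, intChoose_natCast_s10]

theorem stmt10_general (n : ℕ) (i j : ℤ) :
    ∑ r ∈ Finset.range (n + 2),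
        (-1 : ℤ) ^ r * (Nat.choose (n + 1) r : ℤ) * intChoose ((n : ℤ) + j - i - r) (n : ℤ)
      = if i = j then 1 else 0 := by
  simp_rw [add_sub_assoc (n : ℤ) j i, sum_range_alternating_choose_mul_intChoose, sub_eq_zero,
    eq_comm (a := j)]

theorem stmt10 (n : ℕ) (hn : 1 ≤ n) (i j : ℤ) (h : |j - i| ≤ (n : ℤ)) :
    ∑ r ∈ Finset.range (n + 2),
        (-1 : ℤ) ^ r * (Nat.choose (n + 1) r : ℤ) * intChoose ((n : ℤ) + j - i - r) (n : ℤ)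
      = if i = j then 1 else 0 :=
  stmt10_general n i j
end

section
/- Let (X_1, X_2, …, X_n) be {0,1}-valued random variables on a probability space that form a stationary one-dependent process: the joint distribution of (X_{k+1}, …, X_{k+m}) does not depend on k, and for every k the family (X_1,…,X_k) is independent of the family (X_{k+2}, X_{k+3}, …). Set a_1 = 1, a_i = P(X_1 = X_2 = ⋯ = X_{i-1} = 1) for i ≥ 2, a_0 = 1, and a_i = 0 for i < 0. Then for any binary string (t_1, …, t_{n-1}) whose zeros are exactly at the positions S = {s_1 < s_2 < ⋯ < s_k} ⊆ {1,…,n-1}, with the conventions s_0 = 0 and s_{k+1} = n, one has P(X_1 = t_1, …, X_{n-1} = t_{n-1}) = det( (a_{s_{j+1} - s_i})_{i,j=0}^{k} ), a determinant of a (k+1)×(k+1) matrix. -/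
/-!
Expand the determinant along its last row: since `a` vanishes at negative arguments, only the
last two entries survive, `a (s (k+1) - s k)` and `a 0 = 1`, and their cofactors are the matrices
of the pattern cut off at its last zero `s k` and of the pattern with the zero at `s k` turned
into a one. On the probabilistic side, free the coordinate `p = s k`. Splitting on `X p` writes
the free event as the pattern with `X p = 1` plus the given pattern, while one-dependence factors
it as the pattern on `[1, p)` times the event that `X` is all ones on `(p, n)`, whose probability
is `a (n - p)` by stationarity. This is the same recursion, so the formula follows by induction
on `k`.
-/

open MeasureTheory Set Function

section PatternEvent

variable {Ω : Type*} (X : ℕ → Ω → Bool)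

def patternEvent (I : Set ℕ) (u : ℕ → Bool) : Set Ω := {ω | ∀ i ∈ I, X i ω = u i}

variable {X}

lemma patternEvent_Icc (lo hi : ℕ) (u : ℕ → Bool) :
    patternEvent X (Icc lo hi) u = {ω | ∀ i, lo ≤ i → i ≤ hi → X i ω = u i} := by
  ext ω; simp [patternEvent, and_imp]

lemma patternEvent_empty (u : ℕ → Bool) : patternEvent X ∅ u = univ := by
  simp [patternEvent]

lemma patternEvent_union (I J : Set ℕ) (u : ℕ → Bool) :
    patternEvent X (I ∪ J) u = patternEvent X I u ∩ patternEvent X J u := by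
  ext ω; simp [patternEvent, or_imp, forall_and]

lemma patternEvent_congr {I : Set ℕ} {u v : ℕ → Bool} (h : EqOn u v I) :
    patternEvent X I u = patternEvent X I v := by
  ext ω; simp only [patternEvent, mem_ofPred_eq]
  exact forall₂_congr fun i hi ↦ by rw [h hi]

lemma patternEvent_inter_eq_insert {I : Set ℕ} {j : ℕ} (hj : j ∉ I) (u : ℕ → Bool) (b : Bool) :
    patternEvent X I u ∩ {ω | X j ω = b} = patternEvent X (insert j I) (update u j b) := by
  ext ω
  simp only [patternEvent, mem_inter_iff, mem_ofPred_eq, forall_mem_insert, update_self]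
  rw [and_comm]
  refine and_congr_right fun _ ↦ forall₂_congr fun i hi ↦ ?_
  rw [update_of_ne (ne_of_mem_of_not_mem hi hj)]

lemma patternEvent_Icc_eq_setOf_fin (c m : ℕ) (u : ℕ → Bool) :
    patternEvent X (Icc (c + 1) (c + m)) u
      = {ω | ∀ i : Fin m, X (c + 1 + i) ω = u (c + 1 + i)} := by
  ext ω
  simp only [patternEvent, mem_Icc, mem_ofPred_eq]
  refine ⟨fun h i ↦ h _ ⟨by omega, by omega⟩, fun h i hi ↦ ?_⟩
  simpa [show c + 1 + (i - (c + 1)) = i by omega] using h ⟨i - (c + 1), by omega⟩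

variable [MeasurableSpace Ω] (P : Measure Ω)

lemma measure_eq_inter_true_add_inter_false {f : Ω → Bool} (hf : Measurable f) (S : Set Ω) :
    P S = P (S ∩ {ω | f ω = true}) + P (S ∩ {ω | f ω = false}) := by
  have : S \ {ω | f ω = true} = S ∩ {ω | f ω = false} := by ext ω; simp
  rw [← this]
  exact (measure_inter_add_sdiff S (hf (measurableSet_singleton true))).symm

lemma measure_patternEvent_eq_add {I : Set ℕ} {j : ℕ} (hX : Measurable (X j)) (hj : j ∉ I)
    (u : ℕ → Bool) :
    P (patternEvent X I u) = P (patternEvent X (insert j I) (update u j true))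
      + P (patternEvent X (insert j I) (update u j false)) := by
  rw [measure_eq_inter_true_add_inter_false P hX, patternEvent_inter_eq_insert hj,
    patternEvent_inter_eq_insert hj]

lemma measure_inter_patternEvent_of_insert {A : Set Ω} {J : Set ℕ} {j : ℕ} (hX : Measurable (X j))
    (hj : j ∉ J)
    (h : ∀ v, P (A ∩ patternEvent X (insert j J) v) = P A * P (patternEvent X (insert j J) v))
    (v : ℕ → Bool) :
    P (A ∩ patternEvent X J v) = P A * P (patternEvent X J v) := by
  rw [measure_eq_inter_true_add_inter_false P hX, inter_assoc, inter_assoc,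
    patternEvent_inter_eq_insert hj, patternEvent_inter_eq_insert hj, h, h,
    measure_patternEvent_eq_add P hX hj, mul_add]

lemma measure_inter_patternEvent_Icc_of_le [IsProbabilityMeasure P] (hX : ∀ i, Measurable (X i))
    {A : Set Ω} {lo n : ℕ}
    (h : ∀ v, P (A ∩ patternEvent X (Icc lo n) v) = P A * P (patternEvent X (Icc lo n) v))
    {N : ℕ} (hN : N ≤ n) (v : ℕ → Bool) :
    P (A ∩ patternEvent X (Icc lo N) v) = P A * P (patternEvent X (Icc lo N) v) := by
  induction hN using Nat.decreasingInduction generalizing v with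
  | self => exact h v
  | of_succ N _ ih =>
    by_cases hlo : lo ≤ N + 1
    · refine measure_inter_patternEvent_of_insert P (hX (N + 1)) (by simp) ?_ v
      have hI : insert (N + 1) (Icc lo N) = Icc lo (N + 1) := by ext; simp; omega
      rwa [hI]
    · rw [Icc_eq_empty (by omega), patternEvent_empty]
      simp

lemma toReal_measure_patternEvent_of_last_zero [IsFiniteMeasure P] {p N : ℕ} {τ : ℕ → Bool}
    (hX : Measurable (X p))
    (hindep : P (patternEvent X (Ico 1 p) τ ∩ patternEvent X (Ioo p N) fun _ ↦ true)
      = P (patternEvent X (Ico 1 p) τ) * P (patternEvent X (Ioo p N) fun _ ↦ true))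
    (hp : 0 < p) (hpN : p < N) (hτp : τ p = false) (hτ_true : EqOn τ (fun _ ↦ true) (Ioo p N)) :
    (P (patternEvent X (Ico 1 N) τ)).toReal
      = (P (patternEvent X (Ico 1 p) τ)).toReal * (P (patternEvent X (Ioo p N) fun _ ↦ true)).toReal
        - (P (patternEvent X (Ico 1 N) (update τ p true))).toReal := by
  have hfree := measure_patternEvent_eq_add P hX (show p ∉ Ico 1 p ∪ Ioo p N by simp) τ
  rw [show insert p (Ico 1 p ∪ Ioo p N) = Ico 1 N by ext; simp; omega,
    show update τ p false = τ from hτp ▸ update_eq_self p τ, patternEvent_union,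
    patternEvent_congr hτ_true, hindep] at hfree
  rw [← ENNReal.toReal_mul, hfree, ENNReal.toReal_add (measure_ne_top _ _) (measure_ne_top _ _)]
  ring

end PatternEvent

def gapMatrix (a : ℤ → ℝ) (s : ℕ → ℕ) (k : ℕ) : Matrix (Fin (k + 1)) (Fin (k + 1)) ℝ :=
  Matrix.of fun i j ↦ a ((s ((j : ℕ) + 1) : ℤ) - s (i : ℕ))

lemma det_gapMatrix_succ {a : ℤ → ℝ} (ha0 : a 0 = 1) (haneg : ∀ i : ℤ, i < 0 → a i = 0)
    {s : ℕ → ℕ} {k : ℕ} (hs : ∀ j < k, s (j + 1) < s (k + 1)) :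
    (gapMatrix a s (k + 1)).det = a ((s (k + 2) : ℤ) - s (k + 1)) * (gapMatrix a s k).det
      - (gapMatrix a (fun m ↦ if m ≤ k then s m else s (m + 1)) k).det := by
  rw [Matrix.det_succ_row _ (Fin.last (k + 1)), Fin.sum_univ_castSucc, Fin.sum_univ_castSucc]
  have hvanish : ∀ j : Fin k, gapMatrix a s (k + 1) (Fin.last (k + 1)) j.castSucc.castSucc = 0 :=
    fun j ↦ haneg _ (by have := hs j j.isLt; simp; omega)
  have hprefix : (gapMatrix a s (k + 1)).submatrix (Fin.last (k + 1)).succAbove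
      (Fin.last (k + 1)).succAbove = gapMatrix a s k := by
    ext i j; simp [gapMatrix]
  have hremoved : (gapMatrix a s (k + 1)).submatrix (Fin.last (k + 1)).succAbove
      (Fin.last k).castSucc.succAbove
        = gapMatrix a (fun m ↦ if m ≤ k then s m else s (m + 1)) k := by
    ext i j
    rcases Fin.eq_castSucc_or_eq_last j with ⟨j, rfl⟩ | rfl <;> simp [gapMatrix, i.is_le]
  have hone : gapMatrix a s (k + 1) (Fin.last (k + 1)) (Fin.last k).castSucc = 1 := by
    simp [gapMatrix, ha0]
  have hsign : (-1 : ℝ) ^ (k + 1 + k) = -1 := by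
    rw [show k + 1 + k = 2 * k + 1 by ring, pow_succ, pow_mul]; norm_num
  simp only [hvanish, hprefix, hremoved, hone, mul_zero, zero_mul, Finset.sum_const_zero, zero_add,
    Fin.val_last, Fin.val_castSucc, hsign, Even.neg_one_pow ⟨k + 1, rfl⟩]
  simp only [gapMatrix, Matrix.of_apply, Fin.val_last]
  ring

lemma strictMonoOn_Iic_skip {s : ℕ → ℕ} {k : ℕ} (hs : StrictMonoOn s (Iic (k + 2))) :
    StrictMonoOn (fun m ↦ if m ≤ k then s m else s (m + 1)) (Iic (k + 1)) := by
  intro i hi j hj hij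
  simp only [mem_Iic] at hi hj
  dsimp only
  split_ifs <;> exact hs (by simp; omega) (by simp; omega) (by omega)

section ZeroSet

variable {τ : ℕ → Bool} {Z : Set ℕ} {p N : ℕ}

lemma eqOn_true_Ioo_of_zeros (hτ : ∀ i ∈ Ico 1 N, τ i = false ↔ i = p ∨ i ∈ Z)
    (hZ : ∀ z ∈ Z, z < p) : EqOn τ (fun _ ↦ true) (Ioo p N) := fun i hi ↦ by
  by_contra h
  rcases (hτ i ⟨by linarith [hi.1], hi.2⟩).1 (by simpa using h) with rfl | hz
  · exact lt_irrefl _ hi.1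
  · exact lt_asymm (hZ i hz) hi.1

lemma update_true_eq_false_iff_of_zeros (hτ : ∀ i ∈ Ico 1 N, τ i = false ↔ i = p ∨ i ∈ Z)
    (hZ : p ∉ Z) :
    ∀ i ∈ Ico 1 N, update τ p true i = false ↔ i ∈ Z := by
  intro i hi
  by_cases hip : i = p
  · simpa [hip] using hZ
  · rw [update_of_ne hip, hτ i hi, or_iff_right hip]

end ZeroSet

section OneDependent

variable {Ω : Type*} [MeasurableSpace Ω] {P : Measure Ω} {X : ℕ → Ω → Bool} {n : ℕ}

lemma measure_patternEvent_Icc_shift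
    (hstat : ∀ (k m : ℕ) (u : Fin m → Bool), k + m ≤ n →
      P {ω | ∀ i : Fin m, X (k + 1 + (i : ℕ)) ω = u i}
        = P {ω | ∀ i : Fin m, X (1 + (i : ℕ)) ω = u i})
    {c m : ℕ} (h : c + m ≤ n) (u : ℕ → Bool) :
    P (patternEvent X (Icc (c + 1) (c + m)) u)
      = P (patternEvent X (Icc 1 m) fun i ↦ u (c + i)) := by
  have h0 := patternEvent_Icc_eq_setOf_fin (X := X) 0 m fun i ↦ u (c + i)
  simp only [zero_add, ← add_assoc] at h0
  rw [h0, patternEvent_Icc_eq_setOf_fin]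
  exact hstat c m _ h

lemma toReal_measure_patternEvent_Ioo_true [IsProbabilityMeasure P] {a : ℤ → ℝ}
    (hstat : ∀ (k m : ℕ) (u : Fin m → Bool), k + m ≤ n →
      P {ω | ∀ i : Fin m, X (k + 1 + (i : ℕ)) ω = u i}
        = P {ω | ∀ i : Fin m, X (1 + (i : ℕ)) ω = u i})
    (ha1 : a 1 = 1)
    (ha : ∀ i : ℕ, 2 ≤ i → i ≤ n + 1 →
      a i = (P {ω | ∀ m, 1 ≤ m → m ≤ i - 1 → X m ω = true}).toReal)
    {p N : ℕ} (hpN : p < N) (hN : N ≤ n) :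
    (P (patternEvent X (Ioo p N) fun _ ↦ true)).toReal = a ((N : ℤ) - p) := by
  have hIoo : Ioo p N = Icc (p + 1) (p + (N - p - 1)) := by ext; simp; omega
  rw [hIoo, measure_patternEvent_Icc_shift hstat (by omega)]
  obtain h | h : N - p = 1 ∨ 2 ≤ N - p := by omega
  · rw [show N - p - 1 = 0 by omega, Icc_eq_empty (by simp), patternEvent_empty, measure_univ,
      show (N : ℤ) - p = 1 by omega, ha1, ENNReal.toReal_one]
  · rw [show (N : ℤ) - p = ((N - p : ℕ) : ℤ) by omega, ha _ h (by omega), patternEvent_Icc]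

lemma measure_inter_patternEvent_Ico_Ioo [IsProbabilityMeasure P] (hX : ∀ i, Measurable (X i))
    (honedep : ∀ (k : ℕ) (u v : ℕ → Bool),
      P ({ω | ∀ i, 1 ≤ i → i ≤ k → X i ω = u i} ∩
          {ω | ∀ i, k + 2 ≤ i → i ≤ n → X i ω = v i})
        = P {ω | ∀ i, 1 ≤ i → i ≤ k → X i ω = u i} *
            P {ω | ∀ i, k + 2 ≤ i → i ≤ n → X i ω = v i})
    (p N : ℕ) (u v : ℕ → Bool) (hN : N ≤ n) :
    P (patternEvent X (Ico 1 p) u ∩ patternEvent X (Ioo p N) v)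
      = P (patternEvent X (Ico 1 p) u) * P (patternEvent X (Ioo p N) v) := by
  rcases Nat.eq_zero_or_pos p with rfl | hp
  · simp [patternEvent_empty]
  have hIco : Ico 1 p = Icc 1 (p - 1) := by ext; simp; omega
  have hIoo : Ioo p N = Icc (p - 1 + 2) (N - 1) := by ext; simp; omega
  rw [hIco, hIoo]
  refine measure_inter_patternEvent_Icc_of_le P hX (n := n) (fun v ↦ ?_) (by omega) v
  simpa only [patternEvent_Icc] using honedep (p - 1) u v

theorem toReal_measure_patternEvent_eq_det_gapMatrix [IsFiniteMeasure P] {a : ℤ → ℝ}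
    (hX : ∀ i, Measurable (X i))
    (hindep : ∀ (p N : ℕ) (u v : ℕ → Bool), N ≤ n →
      P (patternEvent X (Ico 1 p) u ∩ patternEvent X (Ioo p N) v)
        = P (patternEvent X (Ico 1 p) u) * P (patternEvent X (Ioo p N) v))
    (hones : ∀ p N : ℕ, p < N → N ≤ n →
      (P (patternEvent X (Ioo p N) fun _ ↦ true)).toReal = a ((N : ℤ) - p))
    (ha0 : a 0 = 1) (haneg : ∀ i : ℤ, i < 0 → a i = 0)
    (k : ℕ) (s : ℕ → ℕ) (τ : ℕ → Bool) (hs0 : s 0 = 0) (hs : StrictMonoOn s (Iic (k + 1)))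
    (hsn : s (k + 1) ≤ n) (hτ : ∀ i ∈ Ico 1 (s (k + 1)), τ i = false ↔ i ∈ s '' Icc 1 k) :
    (P (patternEvent X (Ico 1 (s (k + 1))) τ)).toReal = (gapMatrix a s k).det := by
  induction k generalizing s τ with
  | zero =>
    have hτ1 : EqOn τ (fun _ ↦ true) (Ioo 0 (s 1)) := fun i hi ↦ by simpa using hτ i hi
    have hs1 : 0 < s 1 := hs0 ▸ hs (by simp) (by simp) zero_lt_one
    rw [show Ico 1 (s 1) = Ioo 0 (s 1) by ext; simp; omega, patternEvent_congr hτ1,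
      hones 0 (s 1) hs1 hsn, Matrix.det_fin_one]
    simp [gapMatrix, hs0]
  | succ k ih =>
    set p := s (k + 1)
    set N := s (k + 2)
    have hs_lt : ∀ {i j}, i < j → j ≤ k + 2 → s i < s j := fun hij hj ↦
      hs (by simp; omega) (by simpa using hj) hij
    have hp : 0 < p := hs0 ▸ hs_lt (Nat.succ_pos k) (by omega)
    have hpN : p < N := hs_lt (by omega) le_rfl
    have hZp : ∀ z ∈ s '' Icc 1 k, z < p := by
      rintro _ ⟨j, hj, rfl⟩
      exact hs_lt (by simp at hj; omega) (by omega)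
    have hτ' : ∀ i ∈ Ico 1 N, τ i = false ↔ i = p ∨ i ∈ s '' Icc 1 k := by
      intro i hi
      rw [hτ i hi, show Icc 1 (k + 1) = insert (k + 1) (Icc 1 k) by ext; simp; omega,
        image_insert_eq, mem_insert_iff]
    have hτp : τ p = false := (hτ' p ⟨hp, hpN⟩).2 (Or.inl rfl)
    have hprefix : (P (patternEvent X (Ico 1 p) τ)).toReal = (gapMatrix a s k).det := by
      refine ih s τ hs0 (hs.mono (Iic_subset_Iic.2 (by omega))) (by omega) fun i hi ↦ ?_
      rw [hτ' i ⟨hi.1, hi.2.trans hpN⟩, or_iff_right hi.2.ne]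
    set s' : ℕ → ℕ := fun m ↦ if m ≤ k then s m else s (m + 1)
    have hs'N : s' (k + 1) = N := if_neg (by omega)
    have hs'Z : s' '' Icc 1 k = s '' Icc 1 k :=
      (show EqOn s' s (Icc 1 k) from fun j hj ↦ if_pos hj.2).image_eq
    have hremoved : (P (patternEvent X (Ico 1 N) (update τ p true))).toReal
        = (gapMatrix a s' k).det :=
      hs'N ▸ ih s' (update τ p true) (by simp [s', hs0]) (strictMonoOn_Iic_skip hs) (hs'N ▸ hsn)
        (hs'N ▸ hs'Z ▸ update_true_eq_false_iff_of_zeros hτ' fun hz ↦ lt_irrefl _ (hZp p hz))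
    rw [toReal_measure_patternEvent_of_last_zero P (hX p) (hindep p N τ _ hsn) hp hpN hτp
      (eqOn_true_Ioo_of_zeros hτ' hZp),
      det_gapMatrix_succ ha0 haneg fun j hj ↦ hs_lt (by omega) (by omega), hprefix, hremoved,
      hones p N hpN hsn]
    ring

end OneDependent

theorem stmt13_general {Ω : Type*} [MeasurableSpace Ω] (P : Measure Ω) [IsProbabilityMeasure P]
    (n : ℕ)
    (X : ℕ → Ω → Bool) (hXmeas : ∀ i, Measurable (X i))
    (hstat : ∀ (k m : ℕ) (u : Fin m → Bool), k + m ≤ n →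
      P {ω | ∀ i : Fin m, X (k + 1 + (i : ℕ)) ω = u i}
        = P {ω | ∀ i : Fin m, X (1 + (i : ℕ)) ω = u i})
    (honedep : ∀ (k : ℕ) (u v : ℕ → Bool),
      P ({ω | ∀ i, 1 ≤ i → i ≤ k → X i ω = u i} ∩
          {ω | ∀ i, k + 2 ≤ i → i ≤ n → X i ω = v i})
        = P {ω | ∀ i, 1 ≤ i → i ≤ k → X i ω = u i} *
            P {ω | ∀ i, k + 2 ≤ i → i ≤ n → X i ω = v i})
    (a : ℤ → ℝ) (ha0 : a 0 = 1) (ha1 : a 1 = 1) (haneg : ∀ i : ℤ, i < 0 → a i = 0)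
    (ha : ∀ i : ℕ, 2 ≤ i → i ≤ n + 1 →
      a i = (P {ω | ∀ m, 1 ≤ m → m ≤ i - 1 → X m ω = true}).toReal)
    (t : ℕ → Bool) (k : ℕ) (s : ℕ → ℕ)
    (hs0 : s 0 = 0) (hsk : s (k + 1) = n)
    (hsmono : ∀ i j : ℕ, i < j → j ≤ k + 1 → s i < s j)
    (hzeros : ∀ i : ℕ, 1 ≤ i → i ≤ n - 1 →
      (t i = false ↔ ∃ j : ℕ, 1 ≤ j ∧ j ≤ k ∧ s j = i)) :
    (P {ω | ∀ i, 1 ≤ i → i ≤ n - 1 → X i ω = t i}).toReal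
      = Matrix.det
          (Matrix.of fun i j : Fin (k + 1) =>
            a ((s ((j : ℕ) + 1) : ℤ) - (s (i : ℕ) : ℤ))) := by
  have hevent : {ω | ∀ i, 1 ≤ i → i ≤ n - 1 → X i ω = t i}
      = patternEvent X (Ico 1 (s (k + 1))) t := by
    rw [← patternEvent_Icc, hsk, show Icc 1 (n - 1) = Ico 1 n by ext; simp; omega]
  rw [hevent]
  refine toReal_measure_patternEvent_eq_det_gapMatrix hXmeas
    (measure_inter_patternEvent_Ico_Ioo hXmeas honedep)
    (fun p N hpN hN ↦ toReal_measure_patternEvent_Ioo_true hstat ha1 ha hpN hN) ha0 haneg k s t hs0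
    (fun i hi j hj hij ↦ hsmono i j hij hj) hsk.le fun i hi ↦ ?_
  rw [hzeros i hi.1 (by have := hi.2; omega)]
  simp [and_assoc]

/-- Borodin–Diaconis–Fulman determinantal formula for stationary one-dependent
binary processes. Here `X 1, …, X n` is the process (with `true` = 1), which is:
* stationary: the joint distribution of `(X (k+1), …, X (k+m))` does not depend on `k`;
* one-dependent: `(X 1, …, X k)` is independent of `(X (k+2), …, X n)`.

With `a 1 = 1`, `a i = P(X 1 = ⋯ = X (i-1) = 1)` for `i ≥ 2`, `a 0 = 1`, `a i = 0`
for `i < 0`, and a binary string `t 1, …, t (n-1)` whose zeros are exactly at positions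
`s 1 < ⋯ < s k` (with conventions `s 0 = 0`, `s (k+1) = n`), one has
`P(X 1 = t 1, …, X (n-1) = t (n-1)) = det (a (s (j+1) - s i))_{i,j=0}^k`. -/
theorem stmt13 {Ω : Type*} [MeasurableSpace Ω] (P : Measure Ω) [IsProbabilityMeasure P]
    (n : ℕ) (hn : 1 ≤ n)
    (X : ℕ → Ω → Bool) (hXmeas : ∀ i, Measurable (X i))
    (hstat : ∀ (k m : ℕ) (u : Fin m → Bool), k + m ≤ n →
      P {ω | ∀ i : Fin m, X (k + 1 + (i : ℕ)) ω = u i}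
        = P {ω | ∀ i : Fin m, X (1 + (i : ℕ)) ω = u i})
    (honedep : ∀ (k : ℕ) (u v : ℕ → Bool),
      P ({ω | ∀ i, 1 ≤ i → i ≤ k → X i ω = u i} ∩
          {ω | ∀ i, k + 2 ≤ i → i ≤ n → X i ω = v i})
        = P {ω | ∀ i, 1 ≤ i → i ≤ k → X i ω = u i} *
            P {ω | ∀ i, k + 2 ≤ i → i ≤ n → X i ω = v i})
    (a : ℤ → ℝ) (ha0 : a 0 = 1) (ha1 : a 1 = 1) (haneg : ∀ i : ℤ, i < 0 → a i = 0)
    (ha : ∀ i : ℕ, 2 ≤ i → i ≤ n + 1 →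
      a i = (P {ω | ∀ m, 1 ≤ m → m ≤ i - 1 → X m ω = true}).toReal)
    (t : ℕ → Bool) (k : ℕ) (s : ℕ → ℕ)
    (hs0 : s 0 = 0) (hsk : s (k + 1) = n)
    (hsmono : ∀ i j : ℕ, i < j → j ≤ k + 1 → s i < s j)
    (hzeros : ∀ i : ℕ, 1 ≤ i → i ≤ n - 1 →
      (t i = false ↔ ∃ j : ℕ, 1 ≤ j ∧ j ≤ k ∧ s j = i)) :
    (P {ω | ∀ i, 1 ≤ i → i ≤ n - 1 → X i ω = t i}).toReal
      = Matrix.det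
          (Matrix.of fun i j : Fin (k + 1) =>
            a ((s ((j : ℕ) + 1) : ℤ) - (s (i : ℕ) : ℤ))) :=
  stmt13_general P n X hXmeas hstat honedep a ha0 ha1 haneg ha t k s hs0 hsk hsmono hzeros
end

section
/- Fix an odd integer b ≥ 3 and for each integer i ≥ 1 define a_i = b^{-i} times the number of i-tuples (r_1,…,r_i) of integers with |r_k| ≤ (b-1)/2 for all k such that |r_k - r_{k+1}| ≥ (b+1)/2 for all 1 ≤ k ≤ i-1 (a_i is the probability that adding a column of i uniformly random balanced base-b digits produces i-1 consecutive carries). Then for odd i > 1, a_i = (8/b^{i+1}) · Σ_{r=1}^{(b-1)/2} λ_r^{(i-1)/2} · v_r², and for even i > 0, a_i = (8/b^{i+1}) · Σ_{r=1}^{(b-1)/2} λ_r^{(i-2)/2} · v_r · w_r, where λ_r = 1/(4·sin²((2r-1)π/(2b))), v_r = Σ_{j=1}^{(b-1)/2} sin((2r-1)jπ/b), and w_r = Σ_{j=1}^{(b-1)/2} j·sin((2r-1)jπ/b). -/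
open Real

/-- The number of `i`-tuples `(r_1, …, r_i)` of balanced base-`b` digits
(integers with `|r_k| ≤ (b-1)/2`) such that `|r_k - r_{k+1}| ≥ (b+1)/2` for all
`1 ≤ k ≤ i-1` (i.e. each consecutive pair produces a carry). -/
noncomputable def carryCount (b : ℤ) (i : ℕ) : ℕ :=
  (Finset.filter
    (fun r : Fin i → ℤ =>
      ∀ k l : Fin i, (l : ℕ) = (k : ℕ) + 1 → (b + 1) / 2 ≤ |r k - r l|)
    (Fintype.piFinset fun _ : Fin i => Finset.Icc (-((b - 1) / 2)) ((b - 1) / 2))).card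

/-- `λ_r = 1/(4 sin²((2r-1)π/(2b)))`. -/
noncomputable def lamEig (b : ℤ) (r : ℤ) : ℝ :=
  1 / (4 * Real.sin ((2 * (r : ℝ) - 1) * Real.pi / (2 * (b : ℝ))) ^ 2)

/-- `v_r = Σ_{j=1}^{(b-1)/2} sin((2r-1)jπ/b)`. -/
noncomputable def vSum (b : ℤ) (r : ℤ) : ℝ :=
  ∑ j ∈ Finset.Icc (1 : ℤ) ((b - 1) / 2),
    Real.sin ((2 * (r : ℝ) - 1) * (j : ℝ) * Real.pi / (b : ℝ))

/-- `w_r = Σ_{j=1}^{(b-1)/2} j sin((2r-1)jπ/b)`. -/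
noncomputable def wSum (b : ℤ) (r : ℤ) : ℝ :=
  ∑ j ∈ Finset.Icc (1 : ℤ) ((b - 1) / 2),
    (j : ℝ) * Real.sin ((2 * (r : ℝ) - 1) * (j : ℝ) * Real.pi / (b : ℝ))

/-!
Write `b = 2m + 1`. Counting carry chains digit by digit, the number of chains of length `n + 1`
starting at a digit `y` is obtained by iterating a transfer operator. By the symmetry `y ↦ -y`,
and since the digit `0` starts no carry, only the digits `1, …, m` matter, where the operator is
the `0/1` matrix `A j k = [j + k > m]`. A telescoping sum shows that the vectors
`s_r j = sin ((2r - 1) j π / b)`, `1 ≤ r ≤ m`, are eigenvectors of `A` with eigenvalues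
`μ_r = ± 1 / (2 sin ((2r - 1) π / (2b)))`, and they are orthogonal with squared norm `b / 4`.
Expanding the all-ones vector in this basis gives `(8 / b) ∑ r, v_r² μ_r ^ (i - 1)` chains of
length `i ≥ 2`; since `μ_r² = λ_r` and `μ_r v_r = w_r`, this is the claimed formula in both
parities.
-/

open Finset

section Chains

variable {α : Type*}

def IsTupleChain (R : α → α → Prop) {n : ℕ} (r : Fin n → α) : Prop :=
  ∀ k l : Fin n, (l : ℕ) = k + 1 → R (r k) (r l)

instance (R : α → α → Prop) [DecidableRel R] {n : ℕ} (r : Fin n → α) :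
    Decidable (IsTupleChain R r) := by
  unfold IsTupleChain; infer_instance

theorem isTupleChain_cons {R : α → α → Prop} {n : ℕ} {y : α} {s : Fin (n + 1) → α} :
    IsTupleChain R (Fin.cons y s : Fin (n + 2) → α) ↔ R y (s 0) ∧ IsTupleChain R s := by
  constructor
  · intro h
    refine ⟨h 0 1 rfl, fun k l hkl => h k.succ l.succ (by simp [hkl])⟩
  · rintro ⟨h0, hs⟩ k l hkl
    cases k using Fin.cases with
    | zero => obtain rfl : l = 1 := Fin.ext hkl; exact h0
    | succ k =>
      cases l using Fin.cases with
      | zero => simp at hkl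
      | succ l => exact hs k l (by simpa using hkl)

def walkCount (S : Finset α) (R : α → α → Prop) [DecidableRel R] : ℕ → α → ℕ
  | 0, _ => 1
  | n + 1, y => ∑ x ∈ S with R y x, walkCount S R n x

variable {S : Finset α} {R : α → α → Prop} [DecidableRel R]

theorem card_tupleChain_head_eq_walkCount [DecidableEq α] (n : ℕ) {y : α} (hy : y ∈ S) :
    #{r ∈ Fintype.piFinset fun _ : Fin (n + 1) => S | r 0 = y ∧ IsTupleChain R r}
      = walkCount S R n y := by
  induction n generalizing y with
  | zero =>
    rw [walkCount, card_eq_one]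
    refine ⟨fun _ => y, ?_⟩
    ext r
    simp only [mem_filter, Fintype.mem_piFinset, mem_singleton]
    refine ⟨fun h => funext fun k => Fin.fin_one_eq_zero k ▸ h.2.1, ?_⟩
    rintro rfl
    exact ⟨fun _ => hy, rfl, fun k l hkl => absurd l.2 (by omega)⟩
  | succ n ih =>
    rw [walkCount, ← sum_congr rfl fun x hx => ih (mem_filter.1 hx).1, ← card_sigma]
    refine card_nbij' (fun r => ⟨r 1, Fin.tail r⟩) (fun p => Fin.cons y p.2) ?_ ?_ ?_ ?_
    · intro r hr
      simp only [coe_filter, Set.mem_ofPred_eq, Fintype.mem_piFinset] at hr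
      obtain ⟨hS, rfl, hR⟩ := hr
      rw [← Fin.cons_self_tail r, isTupleChain_cons] at hR
      simp only [coe_sigma, Set.mem_sigma_iff, coe_filter, Set.mem_ofPred_eq,
        Fintype.mem_piFinset]
      exact ⟨⟨hS 1, hR.1⟩, fun k => hS k.succ, rfl, hR.2⟩
    · rintro ⟨x, s⟩ hp
      simp only [coe_sigma, Set.mem_sigma_iff, coe_filter, Set.mem_ofPred_eq,
        Fintype.mem_piFinset] at hp
      obtain ⟨⟨-, hyx⟩, hS, rfl, hs⟩ := hp
      simp [Fin.forall_fin_succ, isTupleChain_cons, hy, hS, hyx, hs]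
    · intro r hr
      simp only [coe_filter, Set.mem_ofPred_eq] at hr
      simp [← hr.2.1]
    · rintro ⟨x, s⟩ hp
      simp only [coe_sigma, Set.mem_sigma_iff, coe_filter, Set.mem_ofPred_eq] at hp
      simp [← hp.2.2.1]

theorem card_tupleChain_eq_sum_walkCount (n : ℕ) :
    #{r ∈ Fintype.piFinset fun _ : Fin (n + 1) => S | IsTupleChain R r}
      = ∑ y ∈ S, walkCount S R n y := by
  classical
  rw [card_eq_sum_card_fiberwise (f := fun r => r 0) (t := S) fun r hr => by
    simp only [coe_filter, Set.mem_ofPred_eq, Fintype.mem_piFinset] at hr; exact hr.1 0]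
  refine sum_congr rfl fun y hy => ?_
  rw [filter_filter, ← card_tupleChain_head_eq_walkCount n hy]
  simp only [and_comm]

theorem walkCount_apply_equiv (e : α ≃ α) (hS : ∀ x, x ∈ S ↔ e x ∈ S)
    (hR : ∀ x y, R (e x) (e y) ↔ R x y) (n : ℕ) (y : α) :
    walkCount S R n (e y) = walkCount S R n y := by
  induction n generalizing y with
  | zero => rfl
  | succ n ih =>
    refine sum_equiv e.symm (fun x => ?_) fun x _ => ?_
    · rw [mem_filter, mem_filter, hS (e.symm x), ← hR y, Equiv.apply_symm_apply]
    · rw [← ih (e.symm x), Equiv.apply_symm_apply]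

end Chains

noncomputable def carryWalks (m : ℤ) : ℕ → ℤ → ℕ :=
  walkCount (Icc (-m) m) fun y x => m + 1 ≤ |y - x|

theorem carryCount_eq_sum_carryWalks (m : ℤ) (n : ℕ) :
    carryCount (2 * m + 1) (n + 1) = ∑ y ∈ Icc (-m) m, carryWalks m n y := by
  rw [carryWalks, ← card_tupleChain_eq_sum_walkCount]
  unfold carryCount IsTupleChain
  rw [show (2 * m + 1 - 1) / 2 = m by omega, show (2 * m + 1 + 1) / 2 = m + 1 by omega]

theorem carryWalks_neg (m : ℤ) (n : ℕ) (y : ℤ) : carryWalks m n (-y) = carryWalks m n y :=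
  walkCount_apply_equiv (Equiv.neg ℤ) (fun x => by simp [neg_le, and_comm])
    (fun x y => by simp only [Equiv.neg_apply, neg_sub_neg, abs_sub_comm]) n y

theorem carryWalks_succ_of_pos {m j : ℤ} (hj : j ∈ Icc 1 m) (n : ℕ) :
    carryWalks m (n + 1) j = ∑ k ∈ Icc (m + 1 - j) m, carryWalks m n k := by
  rw [mem_Icc] at hj
  have hcarry : {x ∈ Icc (-m) m | m + 1 ≤ |j - x|} = Icc (-m) (j - m - 1) := by
    ext x
    simp only [mem_filter, mem_Icc, le_abs]
    omega
  rw [carryWalks, walkCount, hcarry]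
  refine sum_equiv (Equiv.neg ℤ) (fun x => ?_) fun x _ => (carryWalks_neg m n x).symm
  simp only [mem_Icc, Equiv.neg_apply]
  omega

theorem carryWalks_succ_zero (m : ℤ) (n : ℕ) : carryWalks m (n + 1) 0 = 0 := by
  rw [carryWalks, walkCount, sum_eq_zero]
  intro x hx
  simp only [mem_filter, mem_Icc, zero_sub, abs_neg] at hx
  exact absurd hx.2 (not_le.2 (by rw [abs_lt]; omega))

theorem sum_carryWalks_succ (m : ℤ) (n : ℕ) :
    ∑ y ∈ Icc (-m) m, carryWalks m (n + 1) y
      = 2 * ∑ j ∈ Icc 1 m, carryWalks m (n + 1) j := by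
  rcases lt_or_ge m 0 with hm | hm
  · rw [Icc_eq_empty (by omega), Icc_eq_empty (by omega), sum_empty, mul_zero]
  have hsplit : Icc (-m) m = (Icc (-m) (-1) ∪ {0}) ∪ Icc 1 m := by
    ext x; simp only [mem_union, mem_Icc, mem_singleton]; omega
  have hneg : ∑ y ∈ Icc (-m) (-1), carryWalks m (n + 1) y
      = ∑ j ∈ Icc 1 m, carryWalks m (n + 1) j := by
    refine sum_equiv (Equiv.neg ℤ) (fun x => ?_) fun x _ => (carryWalks_neg m _ x).symm
    simp only [mem_Icc, Equiv.neg_apply]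
    omega
  rw [hsplit, sum_union, sum_union, sum_singleton, hneg, carryWalks_succ_zero, two_mul,
    add_zero]
  · rw [disjoint_singleton_right, mem_Icc]; omega
  · rw [disjoint_left]; intro x; simp only [mem_union, mem_Icc, mem_singleton]; omega

theorem sum_Icc_int_sub {M : Type*} [AddCommGroup M] (g : ℤ → M) {a c : ℤ} (h : a ≤ c + 1) :
    ∑ k ∈ Icc a c, (g (k + 1) - g k) = g (c + 1) - g a := by
  induction c, (show a - 1 ≤ c by omega) using Int.leInduction with
  | base => simp
  | succ c hc ih =>
    rw [← insert_Icc_right_eq_Icc_add_one (by omega), sum_insert (by simp), ih (by omega)]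
    abel

theorem sum_Icc_sum_Icc_tail (m : ℤ) (f : ℤ → ℝ) :
    ∑ j ∈ Icc 1 m, ∑ k ∈ Icc (m + 1 - j) m, f k = ∑ k ∈ Icc 1 m, k * f k := by
  rw [sum_comm' (t' := Icc 1 m) (s' := fun k => Icc (m + 1 - k) m)
    (fun j k => by simp only [mem_Icc]; omega)]
  refine sum_congr rfl fun k hk => ?_
  rw [mem_Icc] at hk
  rw [sum_const, Int.card_Icc, nsmul_eq_mul, show m + 1 - (m + 1 - k) = k by ring]
  congr 1
  exact_mod_cast Int.toNat_of_nonneg (by omega)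

theorem cos_odd_mul_pi_div_two (r : ℤ) : cos ((2 * r - 1) * π / 2) = 0 :=
  cos_eq_zero_iff.2 ⟨r - 1, by push_cast; ring⟩

theorem two_mul_sin_mul_sum_cos_odd_mul (m : ℤ) (hm : 0 ≤ m) (x : ℝ) :
    2 * sin x * ∑ r ∈ Icc 1 m, cos ((2 * r - 1) * x) = sin (2 * m * x) := by
  have hstep (r : ℤ) : 2 * sin x * cos ((2 * r - 1) * x)
      = sin ((2 * (r + 1 : ℤ) - 2) * x) - sin ((2 * r - 2) * x) := by
    have h₁ : (2 * (r + 1 : ℤ) - 2) * x = (2 * r - 1) * x + x := by push_cast; ring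
    have h₂ : (2 * r - 2) * x = (2 * r - 1) * x - x := by ring
    rw [h₁, h₂, sin_add, sin_sub]
    ring
  rw [mul_sum, sum_congr rfl fun r _ => hstep r,
    sum_Icc_int_sub (fun r : ℤ => sin ((2 * r - 2) * x)) (by omega)]
  push_cast
  ring_nf
  simp

theorem sum_cos_odd_mul_int_mul_pi_div (m d : ℤ) (hm : 0 ≤ m) (hd : d ≠ 0)
    (hdm : |d| < 2 * m + 1) :
    ∑ r ∈ Icc 1 m, cos ((2 * r - 1) * (d * π / (2 * m + 1))) = -cos (d * π) / 2 := by
  set x := d * π / (2 * m + 1)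
  have hb : (0 : ℝ) < 2 * m + 1 := by exact_mod_cast (by omega : (0 : ℤ) < 2 * m + 1)
  have hdb : |(d : ℝ)| < 2 * m + 1 := by exact_mod_cast hdm
  have hxπ : |x| < π := by
    rw [abs_div, abs_mul, abs_of_pos pi_pos, abs_of_pos hb, div_lt_iff₀ hb]
    nlinarith [pi_pos]
  have hx : sin x ≠ 0 := by
    rw [Ne, sin_eq_zero_iff_of_lt_of_lt (abs_lt.1 hxπ).1 (abs_lt.1 hxπ).2]
    simp [x, hd, hb.ne', pi_ne_zero]
  have h := two_mul_sin_mul_sum_cos_odd_mul m hm x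
  rw [show 2 * (m : ℝ) * x = d * π - x by simp only [x]; field_simp; ring, sin_sub,
    sin_int_mul_pi] at h
  field_simp
  apply mul_left_cancel₀ hx
  linear_combination h

section Spectral

noncomputable def sinMode (b r j : ℤ) : ℝ := sin ((2 * r - 1) * j * π / b)

/-- The numerator `sin ((2r - 1) π / 2) = (-1) ^ (r + 1)` picks the square root of `λ_r` that is
the eigenvalue of the transfer matrix on `sinMode b r`. -/
noncomputable def carryEigen (b r : ℤ) : ℝ :=
  sin ((2 * r - 1) * π / 2) / (2 * sin ((2 * r - 1) * π / (2 * b)))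

theorem lamEig_eq_carryEigen_sq (b r : ℤ) : lamEig b r = carryEigen b r ^ 2 := by
  have hφ : sin ((2 * r - 1) * π / 2) ^ 2 = 1 := by
    rw [sin_sq, cos_odd_mul_pi_div_two]; norm_num
  rw [lamEig, carryEigen, div_pow, hφ, mul_pow]
  norm_num

variable {b m : ℤ}

theorem sum_sinMode_Icc_tail (hb : b = 2 * m + 1) {r : ℤ} (hr : r ∈ Icc 1 m) {j : ℤ}
    (hj : 0 ≤ j) :
    ∑ k ∈ Icc (m + 1 - j) m, sinMode b r k = carryEigen b r * sinMode b r j := by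
  subst hb
  rw [mem_Icc] at hr
  set θ : ℝ := (2 * r - 1) * π / (2 * (2 * m + 1 : ℤ))
  have hr₁ : (1 : ℝ) ≤ r := by exact_mod_cast hr.1
  have hrm : (r : ℝ) ≤ m := by exact_mod_cast hr.2
  have hθ : 0 < sin θ := by
    apply sin_pos_of_pos_of_lt_pi
    · simp only [θ]; push_cast; apply div_pos <;> nlinarith [pi_pos]
    · simp only [θ]; push_cast; rw [div_lt_iff₀ (by linarith)]; nlinarith [pi_pos]
  have hmode (k : ℤ) : sinMode (2 * m + 1) r k = sin (2 * k * θ) := by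
    rw [sinMode]; congr 1; simp only [θ]; push_cast; field_simp
  have hstep (k : ℤ) : 2 * sin θ * sinMode (2 * m + 1) r k
      = -cos ((2 * (k + 1 : ℤ) - 1) * θ) - -cos ((2 * k - 1) * θ) := by
    rw [hmode, show (2 * (k + 1 : ℤ) - 1) * θ = 2 * k * θ + θ by push_cast; ring,
      show (2 * k - 1) * θ = 2 * k * θ - θ by ring, cos_add, cos_sub]
    ring
  have hφ : (2 * (m + 1 : ℤ) - 1) * θ = (2 * r - 1) * π / 2 := by
    simp only [θ]; push_cast; field_simp [show (2 * m + 1 : ℝ) ≠ 0 by linarith]; ring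
  have hφj : (2 * (m + 1 - j : ℤ) - 1) * θ = (2 * r - 1) * π / 2 - 2 * j * θ := by
    rw [← hφ]; push_cast; ring
  apply mul_left_cancel₀ (mul_ne_zero two_ne_zero hθ.ne')
  rw [mul_sum, sum_congr rfl fun k _ => hstep k,
    sum_Icc_int_sub (fun k : ℤ => -cos ((2 * k - 1) * θ)) (by omega)]
  have hμ : carryEigen (2 * m + 1) r = sin ((2 * r - 1) * π / 2) / (2 * sin θ) := rfl
  simp only [hφ, hφj, cos_sub, cos_odd_mul_pi_div_two, hμ, hmode]
  field_simp
  ring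

theorem sum_sinMode_mul_sinMode (hb : b = 2 * m + 1) {j j' : ℤ} (hj : j ∈ Icc 1 m)
    (hj' : j' ∈ Icc 1 m) :
    ∑ r ∈ Icc 1 m, sinMode b r j * sinMode b r j' = if j = j' then (b : ℝ) / 4 else 0 := by
  subst hb
  rw [mem_Icc] at hj hj'
  have hprod (r : ℤ) : sinMode (2 * m + 1) r j * sinMode (2 * m + 1) r j'
      = (cos ((2 * r - 1) * ((j - j' : ℤ) * π / (2 * m + 1)))
          - cos ((2 * r - 1) * ((j + j' : ℤ) * π / (2 * m + 1)))) / 2 := by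
    simp only [sinMode]
    push_cast
    rw [show (2 * r - 1) * ((j - j') * π / (2 * m + 1)) = (2 * r - 1) * j * π / (2 * m + 1)
        - (2 * r - 1) * j' * π / (2 * m + 1) by ring,
      show (2 * r - 1) * ((j + j') * π / (2 * m + 1)) = (2 * r - 1) * j * π / (2 * m + 1)
        + (2 * r - 1) * j' * π / (2 * m + 1) by ring, cos_sub, cos_add]
    ring
  rw [sum_congr rfl fun r _ => hprod r, ← sum_div, sum_sub_distrib,
    sum_cos_odd_mul_int_mul_pi_div m (j + j') (by omega) (by omega) (by rw [abs_lt]; omega)]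
  split_ifs with hjj
  · subst hjj
    have hcos : cos (((j + j : ℤ) : ℝ) * π) = 1 := by
      rw [show ((j + j : ℤ) : ℝ) * π = (j : ℤ) * (2 * π) by push_cast; ring,
        cos_int_mul_two_pi]
    simp only [sub_self, Int.cast_zero, zero_mul, zero_div, mul_zero, cos_zero, sum_const,
      Int.card_Icc, hcos, nsmul_eq_mul, mul_one]
    rw [show ((m + 1 - 1).toNat : ℝ) = m by norm_cast; omega]
    push_cast
    ring
  · rw [sum_cos_odd_mul_int_mul_pi_div m (j - j') (by omega) (sub_ne_zero.2 hjj)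
      (by rw [abs_lt]; omega),
      show ((j + j' : ℤ) : ℝ) * π = ((j - j' : ℤ) : ℝ) * π + (j' : ℤ) * (2 * π) by
        push_cast; ring,
      cos_add_int_mul_two_pi]
    ring

theorem vSum_eq_sum_sinMode (hb : b = 2 * m + 1) (r : ℤ) :
    vSum b r = ∑ j ∈ Icc 1 m, sinMode b r j := by
  subst hb
  rw [vSum, show (2 * m + 1 - 1) / 2 = m by omega]
  rfl

theorem sum_vSum_mul_sinMode (hb : b = 2 * m + 1) {j : ℤ} (hj : j ∈ Icc 1 m) :
    ∑ r ∈ Icc 1 m, vSum b r * sinMode b r j = (b : ℝ) / 4 := by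
  simp_rw [vSum_eq_sum_sinMode hb, sum_mul]
  rw [sum_comm, sum_congr rfl fun j' hj' => sum_sinMode_mul_sinMode hb hj' hj, sum_ite_eq',
    if_pos hj]

theorem carryWalks_eq_sum_sinMode (hb : b = 2 * m + 1) (n : ℕ) {j : ℤ} (hj : j ∈ Icc 1 m) :
    (carryWalks m n j : ℝ)
      = 4 / b * ∑ r ∈ Icc 1 m, vSum b r * carryEigen b r ^ n * sinMode b r j := by
  induction n generalizing j with
  | zero =>
    have hb0 : (b : ℝ) ≠ 0 := by
      rw [mem_Icc] at hj; exact_mod_cast (by omega : b ≠ 0)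
    rw [show carryWalks m 0 j = 1 from rfl, Nat.cast_one]
    simp only [pow_zero, mul_one, sum_vSum_mul_sinMode hb hj]
    field_simp
  | succ n ih =>
    have htail : Icc (m + 1 - j) m ⊆ Icc 1 m := by
      intro k hk; rw [mem_Icc] at hj hk ⊢; omega
    calc (carryWalks m (n + 1) j : ℝ)
        = ∑ k ∈ Icc (m + 1 - j) m, (carryWalks m n k : ℝ) := by
          rw [carryWalks_succ_of_pos hj]; push_cast; rfl
      _ = 4 / b * ∑ r ∈ Icc 1 m,
            vSum b r * carryEigen b r ^ n * ∑ k ∈ Icc (m + 1 - j) m, sinMode b r k := by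
          rw [sum_congr rfl fun k hk => ih (htail hk), ← mul_sum, sum_comm]
          simp_rw [mul_sum]
      _ = _ := by
          refine congrArg _ (sum_congr rfl fun r hr => ?_)
          rw [sum_sinMode_Icc_tail hb hr (by rw [mem_Icc] at hj; omega), pow_succ]
          ring

theorem wSum_eq_carryEigen_mul_vSum (hb : b = 2 * m + 1) {r : ℤ} (hr : r ∈ Icc 1 m) :
    wSum b r = carryEigen b r * vSum b r := by
  have hw : wSum b r = ∑ j ∈ Icc 1 m, j * sinMode b r j := by
    subst hb
    rw [wSum, show (2 * m + 1 - 1) / 2 = m by omega]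
    rfl
  rw [hw, vSum_eq_sum_sinMode hb, mul_sum, ← sum_Icc_sum_Icc_tail]
  refine sum_congr rfl fun j hj => ?_
  exact sum_sinMode_Icc_tail hb hr (by rw [mem_Icc] at hj; omega)

theorem carryCount_add_two (hb : b = 2 * m + 1) (n : ℕ) :
    (carryCount b (n + 2) : ℝ)
      = 8 / b * ∑ r ∈ Icc 1 m, vSum b r ^ 2 * carryEigen b r ^ (n + 1) := by
  rw [hb, carryCount_eq_sum_carryWalks, sum_carryWalks_succ, ← hb]
  push_cast
  rw [sum_congr rfl fun j hj => carryWalks_eq_sum_sinMode hb (n + 1) hj, ← mul_sum, sum_comm]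
  simp_rw [← mul_sum, ← vSum_eq_sum_sinMode hb]
  rw [← mul_assoc, mul_div_assoc', show (2 : ℝ) * 4 = 8 by norm_num]
  exact congrArg _ (sum_congr rfl fun r _ => by ring)

end Spectral

theorem stmt14_general (b : ℤ) (hodd : Odd b) (i : ℕ) :
    (Odd i → 1 < i →
      (carryCount b i : ℝ) / (b : ℝ) ^ i
        = (8 / (b : ℝ) ^ (i + 1)) *
            ∑ r ∈ Finset.Icc (1 : ℤ) ((b - 1) / 2),
              lamEig b r ^ ((i - 1) / 2) * vSum b r ^ 2) ∧
    (Even i → 0 < i →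
      (carryCount b i : ℝ) / (b : ℝ) ^ i
        = (8 / (b : ℝ) ^ (i + 1)) *
            ∑ r ∈ Finset.Icc (1 : ℤ) ((b - 1) / 2),
              lamEig b r ^ ((i - 2) / 2) * vSum b r * wSum b r) := by
  obtain ⟨m, hb⟩ := hodd
  have hm : (b - 1) / 2 = m := by omega
  have hcount (hi : 2 ≤ i) : (carryCount b i : ℝ) / (b : ℝ) ^ i
      = 8 / (b : ℝ) ^ (i + 1) *
          ∑ r ∈ Icc 1 m, vSum b r ^ 2 * carryEigen b r ^ (i - 1) := by
    obtain ⟨n, rfl⟩ : ∃ n, i = n + 2 := ⟨i - 2, by omega⟩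
    rw [carryCount_add_two hb, pow_succ, Nat.add_sub_assoc (by norm_num)]
    ring
  refine ⟨fun hi hi1 => ?_, fun hi hi0 => ?_⟩
  · rw [hm, hcount (by omega)]
    refine congrArg _ (sum_congr rfl fun r _ => ?_)
    rw [lamEig_eq_carryEigen_sq, ← pow_mul, show 2 * ((i - 1) / 2) = i - 1 by
      obtain ⟨k, rfl⟩ := hi; omega]
    ring
  · rw [hm, hcount (by obtain ⟨k, rfl⟩ := hi; omega)]
    refine congrArg _ (sum_congr rfl fun r hr => ?_)
    rw [lamEig_eq_carryEigen_sq, ← pow_mul, wSum_eq_carryEigen_mul_vSum hb hr,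
      show i - 1 = 2 * ((i - 2) / 2) + 1 by obtain ⟨k, rfl⟩ := hi; omega]
    ring

theorem stmt14 (b : ℤ) (hodd : Odd b) (hb : 3 ≤ b) (i : ℕ) :
    (Odd i → 1 < i →
      (carryCount b i : ℝ) / (b : ℝ) ^ i
        = (8 / (b : ℝ) ^ (i + 1)) *
            ∑ r ∈ Finset.Icc (1 : ℤ) ((b - 1) / 2),
              lamEig b r ^ ((i - 1) / 2) * vSum b r ^ 2) ∧
    (Even i → 0 < i →
      (carryCount b i : ℝ) / (b : ℝ) ^ i
        = (8 / (b : ℝ) ^ (i + 1)) *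
            ∑ r ∈ Finset.Icc (1 : ℤ) ((b - 1) / 2),
              lamEig b r ^ ((i - 2) / 2) * vSum b r * wSum b r) :=
  stmt14_general b hodd i
end

section
/- Let b ≥ 3 be an odd integer and set m = (b-1)/2. Let M be the m×m real matrix with (j,k) entry min(j,k) for 1 ≤ j,k ≤ m. Then for each 1 ≤ r ≤ m, the vector ψ_r with entries ψ_r(k) = sin((2r-1)kπ/b) is an eigenvector of M with eigenvalue λ_r = 1/(4·sin²((2r-1)π/(2b))); that is, for all 1 ≤ j ≤ m, Σ_{k=1}^{m} min(j,k)·sin((2r-1)kπ/b) = λ_r · sin((2r-1)jπ/b). -/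
/-! With θ = (2r-1)π/b, writing min(j,k) = #{i ∈ [1,j] : i ≤ k} and swapping sums gives
Σ_k min(j,k) sin kθ = Σ_{i=1}^{j} Σ_{k=i}^{m} sin kθ. Multiplying by 2 sin(θ/2) telescopes the
inner sum to cos((i-½)θ) - cos((m+½)θ), whose second term vanishes because
(m+½)θ = (2r-1)π/2 when b = 2m+1. A second multiplication by 2 sin(θ/2) telescopes
Σ_{i=1}^{j} cos((i-½)θ) to sin jθ. Finally sin(θ/2) ≠ 0 since (2r-1)/(2b) is never an
integer. -/

open Finset Real

theorem Int.sum_Icc_sub' {M : Type*} [AddCommGroup M] (f : ℤ → M) {a b : ℤ}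
    (h : a ≤ b + 1) : ∑ k ∈ Icc a b, (f k - f (k + 1)) = f a - f (b + 1) := by
  induction b, (show a - 1 ≤ b by omega) using Int.leInduction with
  | base => simp
  | succ n hn ih =>
    rw [← insert_Icc_right_eq_Icc_add_one (by omega), sum_insert (by simp), ih (by omega)]
    abel

theorem Int.sum_Icc_min_mul_eq_sum_sum {R : Type*} [Ring R] (g : ℤ → R) {j : ℤ} (hj : 0 ≤ j)
    (n : ℤ) :
    ∑ k ∈ Icc 1 n, ((min j k : ℤ) : R) * g k = ∑ i ∈ Icc 1 j, ∑ k ∈ Icc i n, g k := by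
  rw [sum_comm' (t' := Icc 1 n) (s' := fun k => Icc 1 (min j k)) (by intro i k; simp; omega)]
  refine sum_congr rfl fun k hk => ?_
  rw [sum_const, Int.card_Icc, nsmul_eq_mul, add_sub_cancel_right, ← Int.cast_natCast,
    Int.toNat_of_nonneg (by simp at hk; omega)]

theorem sin_mul_two_sin_half (x θ : ℝ) :
    sin (x * θ) * (2 * sin (θ / 2)) = cos ((x - 1 / 2) * θ) - cos ((x + 1 / 2) * θ) := by
  have hsum : ((x - 1 / 2) * θ + (x + 1 / 2) * θ) / 2 = x * θ := by ring
  have hdiff : ((x - 1 / 2) * θ - (x + 1 / 2) * θ) / 2 = -(θ / 2) := by ring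
  rw [cos_sub_cos, hsum, hdiff, sin_neg]
  ring

theorem cos_mul_two_sin_half (x θ : ℝ) :
    cos ((x - 1 / 2) * θ) * (2 * sin (θ / 2)) = sin (x * θ) - sin ((x - 1) * θ) := by
  have hsum : (x * θ + (x - 1) * θ) / 2 = (x - 1 / 2) * θ := by ring
  have hdiff : (x * θ - (x - 1) * θ) / 2 = θ / 2 := by ring
  rw [sin_sub_sin, hsum, hdiff]
  ring

theorem sum_Icc_sin_mul_two_sin_half (θ : ℝ) {i n : ℤ} (h : i ≤ n + 1) :
    (∑ k ∈ Icc i n, sin (k * θ)) * (2 * sin (θ / 2))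
      = cos ((i - 1 / 2) * θ) - cos ((n + 1 / 2) * θ) := by
  have htel := Int.sum_Icc_sub' (fun k : ℤ => cos ((k - 1 / 2) * θ)) h
  push_cast at htel
  rw [show (n : ℝ) + 1 - 1 / 2 = n + 1 / 2 by ring] at htel
  rw [sum_mul, ← htel]
  refine sum_congr rfl fun k _ => ?_
  rw [sin_mul_two_sin_half]; ring_nf

theorem sum_Icc_cos_mul_two_sin_half (θ : ℝ) {j : ℤ} (hj : 0 ≤ j) :
    (∑ i ∈ Icc 1 j, cos ((i - 1 / 2) * θ)) * (2 * sin (θ / 2)) = sin (j * θ) := by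
  have htel := Int.sum_Icc_sub' (fun k : ℤ => sin ((k - 1) * θ)) (a := 1) (b := j) (by omega)
  push_cast at htel
  rw [sum_mul]
  calc ∑ i ∈ Icc 1 j, cos ((i - 1 / 2) * θ) * (2 * sin (θ / 2))
      = -∑ i ∈ Icc 1 j, (sin (((i : ℝ) - 1) * θ) - sin ((i + 1 - 1) * θ)) := by
        rw [← sum_neg_distrib]
        refine sum_congr rfl fun i _ => ?_
        rw [cos_mul_two_sin_half, add_sub_cancel_right]; ring
    _ = sin (j * θ) := by rw [htel]; simp

theorem sum_Icc_min_mul_sin (θ : ℝ) {n j : ℤ} (hθ : sin (θ / 2) ≠ 0)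
    (hn : cos ((n + 1 / 2) * θ) = 0) (hj : 0 ≤ j) (hjn : j ≤ n + 1) :
    ∑ k ∈ Icc 1 n, ((min j k : ℤ) : ℝ) * sin (k * θ)
      = sin (j * θ) / (4 * sin (θ / 2) ^ 2) := by
  rw [Int.sum_Icc_min_mul_eq_sum_sum _ hj, eq_div_iff (by positivity),
    ← sum_Icc_cos_mul_two_sin_half θ hj,
    show 4 * sin (θ / 2) ^ 2 = 2 * sin (θ / 2) * (2 * sin (θ / 2)) by ring, ← mul_assoc,
    sum_mul]
  congr 1
  refine sum_congr rfl fun i hi => ?_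
  rw [sum_Icc_sin_mul_two_sin_half θ (by simp at hi; omega), hn, sub_zero]

theorem sin_odd_mul_pi_div_two_mul_ne_zero {p q : ℤ} (hp : Odd p) (hq : q ≠ 0) :
    sin (p * π / (2 * q)) ≠ 0 := by
  rw [Ne, sin_eq_zero_iff]
  rintro ⟨n, hn⟩
  have hq' : (q : ℝ) ≠ 0 := by exact_mod_cast hq
  have hreal : ((2 * q * n : ℤ) : ℝ) = p := by
    push_cast
    field_simp at hn
    linarith [pi_pos]
  have hint : 2 * q * n = p := by exact_mod_cast hreal
  exact Int.not_even_iff_odd.2 hp ⟨q * n, by rw [← hint]; ring⟩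

theorem stmt15_general (b : ℤ) (hodd : Odd b) (r j : ℤ)
    (hj1 : 1 ≤ j) (hj2 : j ≤ (b - 1) / 2) :
    ∑ k ∈ Finset.Icc (1 : ℤ) ((b - 1) / 2),
        ((min j k : ℤ) : ℝ) * Real.sin ((2 * (r : ℝ) - 1) * (k : ℝ) * Real.pi / (b : ℝ))
      = (1 / (4 * Real.sin ((2 * (r : ℝ) - 1) * Real.pi / (2 * (b : ℝ))) ^ 2)) *
          Real.sin ((2 * (r : ℝ) - 1) * (j : ℝ) * Real.pi / (b : ℝ)) := by
  obtain ⟨m, hm⟩ := hodd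
  rw [show (b - 1) / 2 = m by omega] at hj2 ⊢
  have hb : (b : ℝ) ≠ 0 := by exact_mod_cast (show b ≠ 0 by omega)
  set θ : ℝ := (2 * r - 1) * π / b with hθ
  have hθ_half : θ / 2 = (2 * r - 1) * π / (2 * b) := by ring
  have hsin : sin (θ / 2) ≠ 0 := by
    rw [hθ_half]
    exact_mod_cast
      sin_odd_mul_pi_div_two_mul_ne_zero (p := 2 * r - 1) ⟨r - 1, by ring⟩ (by omega)
  have hcos : cos ((m + 1 / 2) * θ) = 0 := by
    refine cos_eq_zero_iff.2 ⟨r - 1, ?_⟩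
    rw [show (m : ℝ) + 1 / 2 = b / 2 by rw [hm]; push_cast; ring, hθ]
    field_simp
    push_cast
    ring
  have key := sum_Icc_min_mul_sin θ (n := m) (j := j) hsin hcos (by omega) (by omega)
  have hθ_mul (x : ℝ) : (2 * r - 1) * x * π / b = x * θ := by ring
  simp only [hθ_mul, ← hθ_half]
  rw [key]
  ring

theorem stmt15 (b : ℤ) (hodd : Odd b) (hb : 3 ≤ b) (r j : ℤ)
    (hr1 : 1 ≤ r) (hr2 : r ≤ (b - 1) / 2) (hj1 : 1 ≤ j) (hj2 : j ≤ (b - 1) / 2) :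
    ∑ k ∈ Finset.Icc (1 : ℤ) ((b - 1) / 2),
        ((min j k : ℤ) : ℝ) * Real.sin ((2 * (r : ℝ) - 1) * (k : ℝ) * Real.pi / (b : ℝ))
      = (1 / (4 * Real.sin ((2 * (r : ℝ) - 1) * Real.pi / (2 * (b : ℝ))) ^ 2)) *
          Real.sin ((2 * (r : ℝ) - 1) * (j : ℝ) * Real.pi / (b : ℝ)) :=
  stmt15_general b hodd r j hj1 hj2
end

section
/- For every integer i ≥ 2, the number of i-tuples (r_1,…,r_i) of integers with r_k ∈ {-2,-1,0,1,2} for all k such that |r_k - r_{k+1}| ≥ 3 for all 1 ≤ k ≤ i-1 equals 2·F_{i+2}, where F_k denotes the k-th Fibonacci number with F_1 = F_2 = 1. Consequently, the probability a_i that adding a column of i uniformly random balanced base-5 digits produces i-1 consecutive carries equals 2·F_{i+2}/5^i. -/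
/-!
Only `±1, ±2` can stand next to another digit, and the relation `|x - y| ≥ 3` on them is the path
`1 — -2 — 2 — -1`. Counting the tuples by their last digit, the numbers ending in `±2` and in `±1`
follow the Fibonacci recursion, with values `F (i + 1)` and `F i`, so the total is
`2 (F (i + 1) + F i) = 2 F (i + 2)`.
-/

open Finset Nat

section Chains

variable {α : Type*} (R : α → α → Prop)

def ChainedBy {n : ℕ} (r : Fin n → α) : Prop :=
  ∀ k l : Fin n, (l : ℕ) = k + 1 → R (r k) (r l)

theorem chainedBy_snoc_iff {n : ℕ} (q : Fin (n + 1) → α) (a : α) :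
    ChainedBy R (Fin.snoc q a : Fin (n + 2) → α) ↔ ChainedBy R q ∧ R (q (Fin.last n)) a := by
  constructor
  · intro h
    refine ⟨fun k l hkl => ?_, ?_⟩
    · simpa using h k.castSucc l.castSucc (by simpa using hkl)
    · simpa using h (Fin.last n).castSucc (Fin.last (n + 1)) (by simp)
  · rintro ⟨hq, hlast⟩ k l hkl
    induction l using Fin.lastCases with
    | last =>
      obtain rfl : k = (Fin.last n).castSucc := Fin.ext (by simp at hkl ⊢; omega)
      simpa using hlast
    | cast l =>
      obtain ⟨k, rfl⟩ : ∃ k', k = Fin.castSucc k' := ⟨k.castLT (by simp at hkl; omega), rfl⟩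
      simpa using hq k l (by simpa using hkl)

variable [DecidableRel R]

instance {n : ℕ} : DecidablePred (ChainedBy R (n := n)) :=
  fun _ => inferInstanceAs (Decidable (∀ _ _, _))

variable [DecidableEq α] (s : Finset α)

def chainsEndingAt (n : ℕ) (a : α) : Finset (Fin (n + 1) → α) :=
  (Fintype.piFinset fun _ => s).filter fun r => ChainedBy R r ∧ r (Fin.last n) = a

theorem card_chains_eq_sum_chainsEndingAt (n : ℕ) :
    #((Fintype.piFinset fun _ : Fin (n + 1) => s).filter (ChainedBy R)) =
      ∑ a ∈ s, #(chainsEndingAt R s n a) := by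
  rw [card_eq_sum_card_fiberwise (f := fun r => r (Fin.last n)) (t := s)]
  · simp only [chainsEndingAt, filter_filter]
  · intro r hr
    exact Fintype.mem_piFinset.mp (mem_filter.mp hr).1 _

theorem chainsEndingAt_succ (n : ℕ) {a : α} (ha : a ∈ s) :
    chainsEndingAt R s (n + 1) a =
      ((Fintype.piFinset fun _ => s).filter fun q => ChainedBy R q ∧ R (q (Fin.last n)) a).image
        (Fin.snoc · a) := by
  ext r
  induction r using Fin.snocCases with
  | snoc q x =>
    simp only [chainsEndingAt, mem_filter, mem_image, Fintype.mem_piFinset, Fin.forall_fin_succ',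
      Fin.snoc_castSucc, Fin.snoc_last, Fin.snoc_inj, chainedBy_snoc_iff]
    constructor
    · rintro ⟨⟨hq, -⟩, hchain, rfl⟩
      exact ⟨q, ⟨hq, hchain⟩, rfl, rfl⟩
    · rintro ⟨q, ⟨hq, hchain⟩, rfl, rfl⟩
      exact ⟨⟨hq, ha⟩, hchain, rfl⟩

theorem card_chainsEndingAt_succ (n : ℕ) {a : α} (ha : a ∈ s) :
    #(chainsEndingAt R s (n + 1) a) = ∑ b ∈ s with R b a, #(chainsEndingAt R s n b) := by
  rw [chainsEndingAt_succ R s n ha,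
    card_image_of_injective _ (Fin.snoc_left_injective (α := fun _ => α) a),
    card_eq_sum_card_fiberwise (f := fun q => q (Fin.last n)) (t := s.filter (R · a))]
  · refine sum_congr rfl fun b hb => ?_
    simp only [chainsEndingAt, filter_filter]
    refine congrArg card (filter_congr fun q _ => ?_)
    constructor
    · rintro ⟨⟨hq, -⟩, rfl⟩
      exact ⟨hq, rfl⟩
    · rintro ⟨hq, rfl⟩
      exact ⟨⟨hq, (mem_filter.mp hb).2⟩, rfl⟩
  · intro q hq
    obtain ⟨hs, -, hR⟩ := mem_filter.mp hq
    exact mem_filter.mpr ⟨Fintype.mem_piFinset.mp hs _, hR⟩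

end Chains

noncomputable def carryChainsEndingAt (n : ℕ) (a : ℤ) : ℕ :=
  #(chainsEndingAt (fun x y : ℤ => 3 ≤ |x - y|) (Icc (-2) 2) n a)

theorem carryCount_five (i : ℕ) :
    carryCount 5 i =
      #((Fintype.piFinset fun _ : Fin i => Icc (-2 : ℤ) 2).filter
        (ChainedBy fun x y : ℤ => 3 ≤ |x - y|)) :=
  rfl

theorem carryCount_five_succ (n : ℕ) :
    carryCount 5 (n + 1) = ∑ a ∈ Icc (-2 : ℤ) 2, carryChainsEndingAt n a := by
  rw [carryCount_five, card_chains_eq_sum_chainsEndingAt]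
  rfl

theorem carryChainsEndingAt_succ (n : ℕ) {a : ℤ} (ha : a ∈ Icc (-2 : ℤ) 2) :
    carryChainsEndingAt (n + 1) a =
      ∑ b ∈ Icc (-2 : ℤ) 2 with 3 ≤ |b - a|, carryChainsEndingAt n b :=
  card_chainsEndingAt_succ _ _ n ha

theorem Int.Icc_neg_two_two : Icc (-2 : ℤ) 2 = {-2, -1, 0, 1, 2} := by decide

local notation "c" => carryChainsEndingAt

theorem carryChainsEndingAt_recurrence (n : ℕ) :
    c (n + 1) 2 = c n (-2) + c n (-1) ∧ c (n + 1) 1 = c n (-2) ∧ c (n + 1) 0 = 0 ∧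
      c (n + 1) (-1) = c n 2 ∧ c (n + 1) (-2) = c n 1 + c n 2 := by
  simp (disch := decide) only [carryChainsEndingAt_succ, sum_filter, Int.Icc_neg_two_two]
  norm_num [sum_insert]

theorem carryChainsEndingAt_eq_fib (n : ℕ) :
    c (n + 1) 2 = fib (n + 3) ∧ c (n + 1) 1 = fib (n + 2) ∧ c (n + 1) 0 = 0 ∧
      c (n + 1) (-1) = fib (n + 2) ∧ c (n + 1) (-2) = fib (n + 3) := by
  induction n with
  | zero => decide
  | succ n ih =>
    obtain ⟨h2, h1, -, hm1, hm2⟩ := ih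
    obtain ⟨r2, r1, r0, rm1, rm2⟩ := carryChainsEndingAt_recurrence (n + 1)
    refine ⟨?_, ?_, r0, ?_, ?_⟩
    · rw [r2, hm2, hm1, add_comm]
      exact fib_add_two.symm
    · rw [r1, hm2]
    · rw [rm1, h2]
    · rw [rm2, h1, h2]
      exact fib_add_two.symm

theorem carryCount_five_eq_two_mul_fib (n : ℕ) : carryCount 5 (n + 2) = 2 * fib (n + 4) := by
  obtain ⟨h2, h1, h0, hm1, hm2⟩ := carryChainsEndingAt_eq_fib n
  have hfib : fib (n + 4) = fib (n + 2) + fib (n + 3) := fib_add_two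
  rw [carryCount_five_succ, Int.Icc_neg_two_two]
  simp (disch := decide) only [sum_insert, sum_singleton, h2, h1, h0, hm1, hm2]
  omega

theorem stmt19 (i : ℕ) (hi : 2 ≤ i) :
    carryCount 5 i = 2 * Nat.fib (i + 2) ∧
    (carryCount 5 i : ℝ) / 5 ^ i = 2 * (Nat.fib (i + 2) : ℝ) / 5 ^ i := by
  obtain ⟨n, rfl⟩ := Nat.exists_eq_add_of_le' hi
  have hcount := carryCount_five_eq_two_mul_fib n
  exact ⟨hcount, by rw [hcount]; push_cast; rfl⟩
end
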